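/- arXiv:2206.05316 — 2 statements merged into one kernel-verified Lean document; each statement's English description precedes it below -/
import Mathlib

section
/- Let a < b < c < d be dyadic rationals in [0,1]. Then F_{[a,d]} is generated by F_{[a,c]} together with F_{[b,d]}, i.e. F_{[a,d]} = ⟨F_{[a,c]}, F_{[b,d]}⟩. -/
noncomputable section

/-- A dyadic rational real number. -/
def IsDyadic (x : ℝ) : Prop := ∃ a : ℤ, ∃ n : ℕ, x = (a : ℝ) / 2 ^ n

/-- `f` restricted to `[p,q]` is a Thompson-like map onto `[r,s]`: piecewise linear with
finitely many breakpoints, all breakpoints dyadic, all slopes integer powers of 2. -/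
def ThompsonLike (p q r s : ℝ) (f : ℝ → ℝ) : Prop :=
  f p = r ∧ f q = s ∧
  ∃ n : ℕ, 0 < n ∧ ∃ x : ℕ → ℝ,
    x 0 = p ∧ x n = q ∧
    (∀ i, i < n → x i < x (i + 1)) ∧
    (∀ i, i ≤ n → IsDyadic (x i)) ∧
    (∀ i, i < n → ∃ k : ℤ, ∀ t ∈ Set.Icc (x i) (x (i + 1)),
      f t = f (x i) + (2 : ℝ) ^ k * (t - x i))

/-- Membership in `F_{[p,q]}`, realised as permutations of `ℝ` that are Thompson-like
self-maps of `[p,q]` and the identity elsewhere. -/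
def InF (p q : ℝ) (g : Equiv.Perm ℝ) : Prop :=
  ThompsonLike p q p q g ∧ ∀ x : ℝ, x ∉ Set.Icc p q → g x = x

/-- The circle `S¹ = ℝ/ℤ`. -/
abbrev Circle1 := AddCircle (1 : ℝ)

instance : Fact ((0 : ℝ) < 1) := ⟨one_pos⟩

/-- A dyadic point of the circle. -/
def IsDyadicC (x : Circle1) : Prop := ∃ t : ℝ, IsDyadic t ∧ x = (t : Circle1)

/-- Membership in Thompson's group `T`, realised as permutations of the circle:
piecewise linear with finitely many breakpoints, all breakpoints dyadic (hence
preserving the dyadic points), and all slopes integer powers of 2. -/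
def InT (g : Equiv.Perm Circle1) : Prop :=
  ∃ n : ℕ, 0 < n ∧ ∃ x y : ℕ → ℝ,
    x n = x 0 + 1 ∧
    (∀ i, i < n → x i < x (i + 1)) ∧
    (∀ i, i ≤ n → IsDyadic (x i)) ∧
    (∀ i, i < n → IsDyadic (y i)) ∧
    (∀ i, i < n → ∃ k : ℤ, ∀ t ∈ Set.Icc (x i) (x (i + 1)),
      g ((t : ℝ) : Circle1) = (((y i + (2 : ℝ) ^ k * (t - x i)) : ℝ) : Circle1))

/-- Membership in `T_{[r,s]}`: elements of `T` that fix pointwise the complement of the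
open arc `(r,s)` (arcs described by real lifts with `r < s ≤ r + 1`). -/
def InTArc (r s : ℝ) (g : Equiv.Perm Circle1) : Prop :=
  InT g ∧ ∀ t : ℝ, t ∈ Set.Icc s (r + 1) → g ((t : ℝ) : Circle1) = ((t : ℝ) : Circle1)

/-- The open arc `(r,s)` of the circle, described by real lifts. -/
def openArc (r s : ℝ) : Set Circle1 := {p | ∃ t : ℝ, r < t ∧ t < s ∧ p = (t : Circle1)}

/-- Rotation of the circle by `a`. -/
def rotC (a : ℝ) : Equiv.Perm Circle1 := Equiv.addRight ((a : ℝ) : Circle1)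

/-- The standard generator `x₀` of `F` as a map `[0,1] → [0,1]` (identity off `[0,1]`). -/
def x0fun : ℝ → ℝ := fun t =>
  if t < 0 then t else if t ≤ 1/4 then 2 * t else if t ≤ 1/2 then t + 1/4
    else if t ≤ 1 then t / 2 + 1/2 else t

/-- The standard generator `x₁` of `F` as a map `[0,1] → [0,1]` (identity off `[0,1]`). -/
def x1fun : ℝ → ℝ := fun t =>
  if t ≤ 1/2 then t else if t ≤ 5/8 then 2 * t - 1/2 else if t ≤ 3/4 then t + 1/8
    else if t ≤ 1 then t / 2 + 1/2 else t

/-- The element `ζ` as a map `[0,1] → [0,1]` (identity off `[0,1]`). -/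
def zetaFun : ℝ → ℝ := fun t =>
  if t < 0 then t else if t ≤ 1/4 then 2 * t else if t ≤ 3/4 then t / 2 + 3/8 else t

/-- A lift `[0,1] → [1/2,3/2]` of the order-3 rotation-like element
`α = (0,10,11) ↦ (10,11,0)` of `T`. -/
def alpha3Fun : ℝ → ℝ := fun t =>
  if t ≤ 1/2 then t / 2 + 1/2 else if t ≤ 3/4 then t + 1/4 else 2 * t - 1/2


/-!
Take `g ∈ F_{[a,d]}` and a dyadic `r ∈ (b, c)`. The dyadic point `g r` lies in `(a, c)` or in
`(b, d)`, and `F_{[p,q]}` acts transitively on the dyadic points of `(p, q)`, so some `P` in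
`F_{[a,c]}` or `F_{[b,d]}` sends `g r` back to `r`. Then `P g` fixes `r`, hence is the product of
its restrictions to `[a, r] ⊆ [a, c]` and to `[r, d] ⊆ [b, d]`.

Closure of Thompson-like maps under composition and restriction is obtained from a converse:
a continuous map on `[p, q]` that, away from finitely many dyadic points, is locally affine with
slope a power of two is Thompson-like. Between consecutive exceptional points its derivative is
locally constant, hence constant by connectedness, and the mean value theorem makes it affine.
-/

open Set Filter Topology

theorem IsDyadic.add {x y : ℝ} (hx : IsDyadic x) (hy : IsDyadic y) : IsDyadic (x + y) := by
  obtain ⟨a, n, rfl⟩ := hx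
  obtain ⟨b, m, rfl⟩ := hy
  exact ⟨a * 2 ^ m + b * 2 ^ n, n + m, by push_cast; rw [pow_add]; field_simp⟩

theorem IsDyadic.neg {x : ℝ} (hx : IsDyadic x) : IsDyadic (-x) := by
  obtain ⟨a, n, rfl⟩ := hx
  exact ⟨-a, n, by push_cast; ring⟩

theorem IsDyadic.sub {x y : ℝ} (hx : IsDyadic x) (hy : IsDyadic y) : IsDyadic (x - y) := by
  simpa only [sub_eq_add_neg] using hx.add hy.neg

theorem IsDyadic.mul {x y : ℝ} (hx : IsDyadic x) (hy : IsDyadic y) : IsDyadic (x * y) := by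
  obtain ⟨a, n, rfl⟩ := hx
  obtain ⟨b, m, rfl⟩ := hy
  exact ⟨a * b, n + m, by push_cast; rw [pow_add]; field_simp⟩

theorem isDyadic_intCast (a : ℤ) : IsDyadic a := ⟨a, 0, by simp⟩

theorem isDyadic_natCast (a : ℕ) : IsDyadic a := by exact_mod_cast isDyadic_intCast a

theorem isDyadic_two_zpow (k : ℤ) : IsDyadic ((2 : ℝ) ^ k) := by
  rcases Int.eq_nat_or_neg k with ⟨m, rfl | rfl⟩
  · exact_mod_cast isDyadic_natCast (2 ^ m)
  · exact ⟨1, m, by simp [zpow_neg]⟩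

theorem IsDyadic.two_zpow_mul {x : ℝ} (hx : IsDyadic x) (k : ℤ) : IsDyadic (2 ^ k * x) :=
  (isDyadic_two_zpow k).mul hx

theorem exists_isDyadic_btwn {u v : ℝ} (huv : u < v) : ∃ x, IsDyadic x ∧ u < x ∧ x < v := by
  obtain ⟨n, hn⟩ := exists_pow_lt_of_lt_one (sub_pos.2 huv) (by norm_num : (1 / 2 : ℝ) < 1)
  have h2n : (0 : ℝ) < 2 ^ n := by positivity
  have hfloor := Int.floor_le (u * 2 ^ n)
  have hfloor' := Int.lt_floor_add_one (u * 2 ^ n)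
  rw [div_pow, one_pow, div_lt_iff₀ h2n] at hn
  refine ⟨(⌊u * 2 ^ n⌋ + 1) / 2 ^ n,
    ⟨⌊u * 2 ^ n⌋ + 1, n, by push_cast; ring⟩, ?_, ?_⟩
  · rw [lt_div_iff₀ h2n]; linarith
  · rw [div_lt_iff₀ h2n]; linarith

theorem IsDyadic.exists_eq_natCast_div {x : ℝ} (hx : IsDyadic x) (hpos : 0 < x) :
    ∃ a N : ℕ, 0 < a ∧ x = a / 2 ^ N := by
  obtain ⟨z, N, rfl⟩ := hx
  have hz : 0 < z := by
    have : (0 : ℝ) < z := (div_pos_iff_of_pos_right (by positivity)).1 hpos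
    exact_mod_cast this
  exact ⟨z.toNat, N, by omega, by congr 1; exact_mod_cast (Int.toNat_of_nonneg hz.le).symm⟩

def HasTwoPowSlopeAt (f : ℝ → ℝ) (t : ℝ) : Prop :=
  ∃ k : ℤ, ∀ᶠ s in 𝓝 t, f s = f t + 2 ^ k * (s - t)

namespace HasTwoPowSlopeAt

variable {f g : ℝ → ℝ} {t : ℝ}

theorem continuousAt (h : HasTwoPowSlopeAt f t) : ContinuousAt f t := by
  obtain ⟨k, hk⟩ := h
  have hL : ContinuousAt (fun s => f t + (2 : ℝ) ^ k * (s - t)) t := by fun_prop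
  exact hL.congr (hk.mono fun s hs => hs.symm)

theorem comp (hg : HasTwoPowSlopeAt g (f t)) (hf : HasTwoPowSlopeAt f t) :
    HasTwoPowSlopeAt (g ∘ f) t := by
  have hcont := hf.continuousAt
  obtain ⟨l, hl⟩ := hg
  obtain ⟨k, hk⟩ := hf
  refine ⟨l + k, ?_⟩
  filter_upwards [hcont.eventually hl, hk] with s hgs hfs
  simp only [Function.comp_apply]
  rw [hgs, hfs, zpow_add₀ two_ne_zero]
  ring

theorem eventually_hasDerivAt (h : HasTwoPowSlopeAt f t) :
    ∃ k : ℤ, ∀ᶠ s in 𝓝 t, HasDerivAt f (2 ^ k) s := by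
  obtain ⟨k, hk⟩ := h
  refine ⟨k, hk.eventually_nhds.mono fun s hs => ?_⟩
  have hL : HasDerivAt (fun s => f t + (2 : ℝ) ^ k * (s - t)) (2 ^ k) s := by
    simpa using ((hasDerivAt_id s).sub_const t).const_mul ((2 : ℝ) ^ k) |>.const_add (f t)
  exact hL.congr_of_eventuallyEq hs

end HasTwoPowSlopeAt

structure ThompsonPartition (p q r s : ℝ) (f : ℝ → ℝ) where
  apply_left : f p = r
  apply_right : f q = s
  n : ℕ
  n_pos : 0 < n
  x : ℕ → ℝ
  x_zero : x 0 = p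
  x_n : x n = q
  x_lt_succ : ∀ i < n, x i < x (i + 1)
  isDyadic_x : ∀ i ≤ n, IsDyadic (x i)
  k : ℕ → ℤ
  eq_on_piece : ∀ i < n, ∀ t ∈ Icc (x i) (x (i + 1)), f t = f (x i) + 2 ^ k i * (t - x i)

variable {p q r s u v : ℝ} {f g : ℝ → ℝ}

theorem ThompsonLike.nonempty_partition (h : ThompsonLike p q r s f) :
    Nonempty (ThompsonPartition p q r s f) := by
  obtain ⟨hp, hq, n, hn, x, hx0, hxn, hlt, hdy, hk⟩ := h
  choose! k hk using hk
  exact ⟨⟨hp, hq, n, hn, x, hx0, hxn, hlt, hdy, k, hk⟩⟩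

def ThompsonLike.partition (h : ThompsonLike p q r s f) : ThompsonPartition p q r s f :=
  h.nonempty_partition.some

namespace ThompsonPartition

theorem x_strictMonoOn (P : ThompsonPartition p q r s f) : StrictMonoOn P.x (Iic P.n) :=
  strictMonoOn_Iic_of_lt_succ fun i hi => P.x_lt_succ i hi

theorem x_mem_Icc (P : ThompsonPartition p q r s f) {i : ℕ} (hi : i ≤ P.n) :
    P.x i ∈ Icc p q := by
  have h0 := P.x_strictMonoOn.monotoneOn (mem_Iic.2 (Nat.zero_le P.n)) hi (Nat.zero_le i)
  have hn := P.x_strictMonoOn.monotoneOn hi (mem_Iic.2 le_rfl) hi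
  rw [P.x_zero] at h0
  rw [P.x_n] at hn
  exact ⟨h0, hn⟩

theorem Icc_piece_subset (P : ThompsonPartition p q r s f) {i : ℕ} (hi : i < P.n) :
    Icc (P.x i) (P.x (i + 1)) ⊆ Icc p q :=
  Icc_subset_Icc (P.x_mem_Icc hi.le).1 (P.x_mem_Icc hi).2

theorem left_lt_right (P : ThompsonPartition p q r s f) : p < q := by
  have h := P.x_strictMonoOn (mem_Iic.2 (Nat.zero_le P.n)) (mem_Iic.2 le_rfl) P.n_pos
  rwa [P.x_zero, P.x_n] at h

theorem isDyadic_left (P : ThompsonPartition p q r s f) : IsDyadic p := by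
  simpa only [P.x_zero] using P.isDyadic_x 0 (Nat.zero_le _)

theorem isDyadic_right (P : ThompsonPartition p q r s f) : IsDyadic q := by
  simpa only [P.x_n] using P.isDyadic_x P.n le_rfl

theorem exists_mem_piece (P : ThompsonPartition p q r s f) {t : ℝ} (ht : t ∈ Icc p q) :
    ∃ i < P.n, t ∈ Icc (P.x i) (P.x (i + 1)) := by
  have key : ∀ m, 0 < m → m ≤ P.n → t ≤ P.x m →
      ∃ i < m, t ∈ Icc (P.x i) (P.x (i + 1)) := by
    intro m hm
    induction m, hm using Nat.le_induction with
    | base => exact fun _ h => ⟨0, one_pos, by simpa only [P.x_zero] using ht.1, h⟩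
    | succ m hm ih =>
      intro hmn htm
      rcases le_or_gt t (P.x m) with h | h
      · obtain ⟨i, hi, hmem⟩ := ih (by omega) h
        exact ⟨i, by omega, hmem⟩
      · exact ⟨m, by omega, h.le, htm⟩
  exact key P.n P.n_pos le_rfl (by simpa only [P.x_n] using ht.2)

theorem Icc_induction (P : ThompsonPartition p q r s f) (C : Set ℝ → Prop)
    (piece : ∀ i < P.n, C (Icc (P.x i) (P.x (i + 1))))
    (union : ∀ a b c, a ≤ b → b ≤ c → C (Icc a b) → C (Icc b c) → C (Icc a c)) :
    C (Icc p q) := by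
  have key : ∀ m, 0 < m → m ≤ P.n → C (Icc (P.x 0) (P.x m)) := by
    intro m hm
    induction m, hm using Nat.le_induction with
    | base => exact fun _ => piece 0 P.n_pos
    | succ m hm ih =>
      intro hmn
      exact union _ _ _ (P.x_strictMonoOn.monotoneOn (mem_Iic.2 (Nat.zero_le P.n))
          (mem_Iic.2 (by omega)) (Nat.zero_le m))
        (P.x_lt_succ m (by omega)).le (ih (by omega)) (piece m (by omega))
  simpa only [P.x_zero, P.x_n] using key P.n P.n_pos le_rfl

theorem continuousOn (P : ThompsonPartition p q r s f) : ContinuousOn f (Icc p q) := by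
  refine P.Icc_induction (ContinuousOn f) (fun i hi => ?_) fun a b c hab hbc ha hb => ?_
  · have hL : Continuous fun t => f (P.x i) + (2 : ℝ) ^ P.k i * (t - P.x i) := by fun_prop
    exact hL.continuousOn.congr (P.eq_on_piece i hi)
  · rw [← Icc_union_Icc_eq_Icc hab hbc]
    exact ha.union_of_isClosed hb isClosed_Icc isClosed_Icc

theorem strictMonoOn (P : ThompsonPartition p q r s f) : StrictMonoOn f (Icc p q) := by
  refine P.Icc_induction (StrictMonoOn f) (fun i hi => ?_) fun a b c hab hbc ha hb => ?_
  · intro t ht t' ht' htt'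
    rw [P.eq_on_piece i hi t ht, P.eq_on_piece i hi t' ht']
    have := zpow_pos (two_pos (α := ℝ)) (P.k i)
    gcongr
  · rw [← Icc_union_Icc_eq_Icc hab hbc]
    exact ha.union hb (isGreatest_Icc hab) (isLeast_Icc hbc)

theorem mapsTo (P : ThompsonPartition p q r s f) : MapsTo f (Icc p q) (Icc r s) := by
  simpa only [P.apply_left, P.apply_right] using P.strictMonoOn.monotoneOn.mapsTo_Icc

theorem mapsTo_Ioo (P : ThompsonPartition p q r s f) : MapsTo f (Ioo p q) (Ioo r s) := by
  intro y hy
  have hp := P.strictMonoOn (left_mem_Icc.2 P.left_lt_right.le) (Ioo_subset_Icc_self hy) hy.1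
  have hq := P.strictMonoOn (Ioo_subset_Icc_self hy) (right_mem_Icc.2 P.left_lt_right.le) hy.2
  rw [P.apply_left] at hp
  rw [P.apply_right] at hq
  exact ⟨hp, hq⟩

theorem surjOn (P : ThompsonPartition p q r s f) : SurjOn f (Icc p q) (Icc r s) := by
  simpa only [SurjOn, P.apply_left, P.apply_right] using
    intermediate_value_Icc P.left_lt_right.le P.continuousOn

theorem isDyadic_apply_x (P : ThompsonPartition p q r s f) (hr : IsDyadic r) {i : ℕ}
    (hi : i ≤ P.n) : IsDyadic (f (P.x i)) := by
  induction i with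
  | zero => rwa [P.x_zero, P.apply_left]
  | succ i ih =>
    rw [P.eq_on_piece i (by omega) _ ⟨(P.x_lt_succ i (by omega)).le, le_rfl⟩]
    exact (ih (by omega)).add
      (((P.isDyadic_x _ hi).sub (P.isDyadic_x i (by omega))).two_zpow_mul _)

theorem isDyadic_apply_iff (P : ThompsonPartition p q r s f) (hr : IsDyadic r) {t : ℝ}
    (ht : t ∈ Icc p q) : IsDyadic (f t) ↔ IsDyadic t := by
  obtain ⟨i, hi, hti⟩ := P.exists_mem_piece ht
  have hxi := P.isDyadic_x i hi.le
  have hfxi := P.isDyadic_apply_x hr hi.le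
  have heq := P.eq_on_piece i hi t hti
  constructor
  · intro hft
    have ht' : t = P.x i + 2 ^ (-P.k i) * (f t - f (P.x i)) := by
      rw [heq, add_sub_cancel_left, ← mul_assoc, ← zpow_add₀ two_ne_zero]
      simp
    rw [ht']
    exact hxi.add ((hft.sub hfxi).two_zpow_mul _)
  · intro hdt
    rw [heq]
    exact hfxi.add ((hdt.sub hxi).two_zpow_mul _)

def breakpoints (P : ThompsonPartition p q r s f) : Set ℝ := P.x '' Iic P.n

theorem breakpoints_finite (P : ThompsonPartition p q r s f) : P.breakpoints.Finite :=
  (finite_Iic P.n).image P.x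

theorem isDyadic_of_mem_breakpoints (P : ThompsonPartition p q r s f) {t : ℝ}
    (ht : t ∈ P.breakpoints) : IsDyadic t := by
  obtain ⟨i, hi, rfl⟩ := ht
  exact P.isDyadic_x i hi

theorem hasTwoPowSlopeAt (P : ThompsonPartition p q r s f) {t : ℝ} (ht : t ∈ Ioo p q)
    (htP : t ∉ P.breakpoints) : HasTwoPowSlopeAt f t := by
  obtain ⟨i, hi, hti⟩ := P.exists_mem_piece (Ioo_subset_Icc_self ht)
  have hne : ∀ j ≤ P.n, P.x j ≠ t := fun j hj h => htP ⟨j, hj, h⟩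
  have hmem : Icc (P.x i) (P.x (i + 1)) ∈ 𝓝 t :=
    Icc_mem_nhds (hti.1.lt_of_ne (hne i hi.le)) (hti.2.lt_of_ne' (hne (i + 1) hi))
  refine ⟨P.k i, ?_⟩
  filter_upwards [hmem] with y hy
  rw [P.eq_on_piece i hi y hy, P.eq_on_piece i hi t hti]
  ring

end ThompsonPartition

theorem thompsonLike_of_eq_affine (hp : IsDyadic p) (hq : IsDyadic q) (hpq : p < q) (k : ℤ)
    (hf : ∀ t ∈ Icc p q, f t = f p + 2 ^ k * (t - p)) : ThompsonLike p q (f p) (f q) f := by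
  refine ⟨rfl, rfl, 1, one_pos, fun i => if i = 0 then p else q, by simp, by simp,
    fun i hi => ?_, fun i hi => ?_, fun i hi => ⟨k, ?_⟩⟩
  · obtain rfl : i = 0 := by omega
    simpa using hpq
  · rcases Nat.le_one_iff_eq_zero_or_eq_one.1 hi with rfl | rfl <;> simpa
  · obtain rfl : i = 0 := by omega
    simpa using hf

theorem exists_eq_affine_of_hasTwoPowSlopeAt (huv : u < v) (hf : ContinuousOn f (Icc u v))
    (hslope : ∀ t ∈ Ioo u v, HasTwoPowSlopeAt f t) :
    ∃ k : ℤ, ∀ t ∈ Icc u v, f t = f u + 2 ^ k * (t - u) := by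
  have hderiv : ∀ t ∈ Ioo u v, ∃ k : ℤ, ∀ᶠ y in 𝓝 t, HasDerivAt f (2 ^ k) y :=
    fun t ht => (hslope t ht).eventually_hasDerivAt
  have hdiff : ∀ t ∈ Ioo u v, HasDerivAt f (deriv f t) t := fun t ht => by
    obtain ⟨k, hk⟩ := hderiv t ht
    exact hk.self_of_nhds.differentiableAt.hasDerivAt
  have hm : (u + v) / 2 ∈ Ioo u v := ⟨by linarith, by linarith⟩
  have hconst : ∀ t ∈ Ioo u v, deriv f t = deriv f ((u + v) / 2) := fun t ht =>
    isPreconnected_Ioo.induction₂ (fun y z => deriv f y = deriv f z) (fun y hy => by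
        obtain ⟨k, hk⟩ := hderiv y hy
        exact nhdsWithin_le_nhds (hk.mono fun z hz => hk.self_of_nhds.deriv.trans hz.deriv.symm))
      (fun _ _ _ _ _ _ => Eq.trans) (fun _ _ _ _ => Eq.symm) ht hm
  obtain ⟨k, hk⟩ := hderiv _ hm
  refine ⟨k, fun t ht => ?_⟩
  rcases ht.1.eq_or_lt with rfl | hut
  · simp
  obtain ⟨c, hc, hslope⟩ := exists_hasDerivAt_eq_slope f (deriv f) hut
    (hf.mono (Icc_subset_Icc le_rfl ht.2)) fun y hy => hdiff y ⟨hy.1, hy.2.trans_le ht.2⟩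
  rw [hconst c ⟨hc.1, hc.2.trans_le ht.2⟩, hk.self_of_nhds.deriv,
    eq_div_iff (sub_pos.2 hut).ne'] at hslope
  linarith

theorem ThompsonLike.trans {w t : ℝ} (h₁ : ThompsonLike p q r s f)
    (h₂ : ThompsonLike q w s t f) : ThompsonLike p w r t f := by
  let P := h₁.partition
  let Q := h₂.partition
  let x : ℕ → ℝ := fun i => if i ≤ P.n then P.x i else Q.x (i - P.n)
  have hx₁ : ∀ i ≤ P.n, x i = P.x i := fun i hi => if_pos hi
  have hx₂ : ∀ i, P.n ≤ i → x i = Q.x (i - P.n) := by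
    intro i hi
    rcases hi.eq_or_lt with rfl | hi
    · simp [x, P.x_n, Q.x_zero]
    · exact if_neg hi.not_ge
  have hQ : ∀ i, P.n ≤ i → i - P.n + 1 = i + 1 - P.n := fun i hi => by omega
  refine ⟨P.apply_left, Q.apply_right, P.n + Q.n, by have := P.n_pos; omega, x,
    by simp [x, P.x_zero], by rw [hx₂ _ (by omega), Nat.add_sub_cancel_left, Q.x_n],
    fun i hi => ?_, fun i hi => ?_, fun i hi => ?_⟩
  · rcases lt_or_ge i P.n with hiP | hiP
    · rw [hx₁ i hiP.le, hx₁ (i + 1) hiP]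
      exact P.x_lt_succ i hiP
    · rw [hx₂ i hiP, hx₂ (i + 1) (by omega), ← hQ i hiP]
      exact Q.x_lt_succ _ (by omega)
  · rcases le_or_gt i P.n with hiP | hiP
    · rw [hx₁ i hiP]
      exact P.isDyadic_x i hiP
    · rw [hx₂ i hiP.le]
      exact Q.isDyadic_x _ (by omega)
  · rcases lt_or_ge i P.n with hiP | hiP
    · rw [hx₁ i hiP.le, hx₁ (i + 1) hiP]
      exact ⟨P.k i, P.eq_on_piece i hiP⟩
    · rw [hx₂ i hiP, hx₂ (i + 1) (by omega), ← hQ i hiP]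
      exact ⟨Q.k _, Q.eq_on_piece _ (by omega)⟩

theorem thompsonLike_of_hasTwoPowSlopeAt (hp : IsDyadic p) (hq : IsDyadic q) (hpq : p < q)
    (hf : ContinuousOn f (Icc p q)) {S : Set ℝ} (hS : S.Finite) (hSd : ∀ y ∈ S, IsDyadic y)
    (hslope : ∀ t ∈ Ioo p q, t ∉ S → HasTwoPowSlopeAt f t) :
    ThompsonLike p q (f p) (f q) f := by
  induction S, hS using Set.Finite.induction_on generalizing p q with
  | empty =>
    obtain ⟨k, hk⟩ := exists_eq_affine_of_hasTwoPowSlopeAt hpq hf fun t ht => hslope t ht id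
    exact thompsonLike_of_eq_affine hp hq hpq k hk
  | @insert y S hyS _ ih =>
    have hSd' : ∀ z ∈ S, IsDyadic z := fun z hz => hSd z (mem_insert_of_mem y hz)
    by_cases hy : y ∈ Ioo p q
    · have hyd := hSd y (mem_insert y S)
      refine (ih hp hyd hy.1 (hf.mono (Icc_subset_Icc le_rfl hy.2.le)) hSd' ?_).trans
        (ih hyd hq hy.2 (hf.mono (Icc_subset_Icc hy.1.le le_rfl)) hSd' ?_)
      · intro t ht htS
        exact hslope t ⟨ht.1, ht.2.trans hy.2⟩ <| by
          rintro (rfl | h) <;> [exact ht.2.false; exact htS h]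
      · intro t ht htS
        exact hslope t ⟨hy.1.trans ht.1, ht.2⟩ <| by
          rintro (rfl | h) <;> [exact ht.1.false; exact htS h]
    · refine ih hp hq hpq hf hSd' fun t ht htS => hslope t ht ?_
      rintro (rfl | h) <;> [exact hy ht; exact htS h]

namespace ThompsonLike

theorem congr (h : ThompsonLike p q r s f) (hfg : EqOn f g (Icc p q)) :
    ThompsonLike p q r s g := by
  let P := h.partition
  have hp : p ∈ Icc p q := left_mem_Icc.2 P.left_lt_right.le
  have hq : q ∈ Icc p q := right_mem_Icc.2 P.left_lt_right.le
  refine ⟨hfg hp ▸ P.apply_left, hfg hq ▸ P.apply_right, P.n, P.n_pos, P.x, P.x_zero, P.x_n,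
    P.x_lt_succ, P.isDyadic_x, fun i hi => ⟨P.k i, fun t ht => ?_⟩⟩
  rw [← hfg (P.Icc_piece_subset hi ht),
    ← hfg (P.Icc_piece_subset hi ⟨le_rfl, (P.x_lt_succ i hi).le⟩)]
  exact P.eq_on_piece i hi t ht

theorem restrict (h : ThompsonLike p q r s f) (hu : IsDyadic u) (hv : IsDyadic v)
    (hpu : p ≤ u) (huv : u < v) (hvq : v ≤ q) : ThompsonLike u v (f u) (f v) f :=
  let P := h.partition
  thompsonLike_of_hasTwoPowSlopeAt hu hv huv (P.continuousOn.mono (Icc_subset_Icc hpu hvq))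
    P.breakpoints_finite (fun _ => P.isDyadic_of_mem_breakpoints)
    fun _ ht => P.hasTwoPowSlopeAt ⟨hpu.trans_lt ht.1, ht.2.trans_le hvq⟩

theorem comp {t w : ℝ} (hf : ThompsonLike p q r s f) (hg : ThompsonLike r s t w g) :
    ThompsonLike p q t w (g ∘ f) := by
  let P := hf.partition
  let Q := hg.partition
  let S := P.breakpoints ∪ (Icc p q ∩ f ⁻¹' Q.breakpoints)
  have hS : S.Finite := P.breakpoints_finite.union <|
    Set.Finite.of_finite_image (Q.breakpoints_finite.subset (image_preimage_subset _ _)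
      |>.subset (image_mono inter_subset_right)) (P.strictMonoOn.injOn.mono inter_subset_left)
  have hSd : ∀ y ∈ S, IsDyadic y := by
    rintro y (hy | ⟨hy, hfy⟩)
    · exact P.isDyadic_of_mem_breakpoints hy
    · exact (P.isDyadic_apply_iff Q.isDyadic_left hy).1 (Q.isDyadic_of_mem_breakpoints hfy)
  have key := thompsonLike_of_hasTwoPowSlopeAt P.isDyadic_left P.isDyadic_right
    P.left_lt_right (Q.continuousOn.comp P.continuousOn P.mapsTo) hS hSd fun y hy hyS =>
      (Q.hasTwoPowSlopeAt (P.mapsTo_Ioo hy) fun h =>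
        hyS (Or.inr ⟨Ioo_subset_Icc_self hy, h⟩)).comp
        (P.hasTwoPowSlopeAt hy fun h => hyS (Or.inl h))
  rwa [Function.comp_apply, Function.comp_apply, P.apply_left, P.apply_right, Q.apply_left,
    Q.apply_right] at key

theorem piecewise {w t : ℝ} (hf : ThompsonLike p q r s f) (hg : ThompsonLike q w s t g) :
    ThompsonLike p w r t (fun y => if y ≤ q then f y else g y) := by
  refine (hf.congr fun y hy => (if_pos hy.2).symm).trans (hg.congr fun y hy => ?_)
  rcases hy.1.eq_or_lt with rfl | hy
  · simp [hg.partition.apply_left, hf.partition.apply_right]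
  · exact (if_neg hy.not_ge).symm

theorem affine (hp : IsDyadic p) (hq : IsDyadic q) (hpq : p < q) (k : ℤ) (c : ℝ)
    (hr : 2 ^ k * p + c = r) (hs : 2 ^ k * q + c = s) :
    ThompsonLike p q r s (fun y => 2 ^ k * y + c) := by
  subst hr hs
  exact thompsonLike_of_eq_affine (f := fun y => 2 ^ k * y + c) hp hq hpq k fun y _ => by ring

protected theorem id (hp : IsDyadic p) (hq : IsDyadic q) (hpq : p < q) :
    ThompsonLike p q p q id :=
  thompsonLike_of_eq_affine (f := id) hp hq hpq 0 fun y _ => by simp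

theorem symm (h : ThompsonLike p q r s f) (hr : IsDyadic r) (hgf : ∀ y ∈ Icc p q, g (f y) = y) :
    ThompsonLike r s p q g := by
  let P := h.partition
  have hpq := P.left_lt_right
  refine ⟨P.apply_left ▸ hgf p (left_mem_Icc.2 hpq.le),
    P.apply_right ▸ hgf q (right_mem_Icc.2 hpq.le), P.n, P.n_pos, fun i => f (P.x i),
    by simp [P.x_zero, P.apply_left], by simp [P.x_n, P.apply_right],
    fun i hi => P.strictMonoOn (P.x_mem_Icc hi.le) (P.x_mem_Icc hi) (P.x_lt_succ i hi),
    fun i hi => P.isDyadic_apply_x hr hi, fun i hi => ⟨-P.k i, fun y hy => ?_⟩⟩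
  have hcont : ContinuousOn f (Icc (P.x i) (P.x (i + 1))) :=
    P.continuousOn.mono (P.Icc_piece_subset hi)
  obtain ⟨z, hz, rfl⟩ := intermediate_value_Icc (P.x_lt_succ i hi).le hcont hy
  have hx := P.Icc_piece_subset hi ⟨le_rfl, (P.x_lt_succ i hi).le⟩
  rw [hgf z (P.Icc_piece_subset hi hz), hgf _ hx, P.eq_on_piece i hi z hz, add_sub_cancel_left,
    ← mul_assoc, ← zpow_add₀ two_ne_zero]
  simp

theorem exists_symm (h : ThompsonLike p q r s f) (hr : IsDyadic r) :
    ∃ g, ThompsonLike r s p q g :=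
  ⟨_, h.symm hr h.partition.strictMonoOn.injOn.leftInvOn_invFunOn⟩

end ThompsonLike

theorem exists_thompsonLike_zero_one_natCast {a : ℕ} (ha : 0 < a) :
    ∃ f, ThompsonLike 0 1 0 a f := by
  have h0 : IsDyadic 0 := by exact_mod_cast isDyadic_natCast 0
  have h1 : IsDyadic 1 := by exact_mod_cast isDyadic_natCast 1
  have hhalf : IsDyadic (1 / 2) := ⟨1, 1, by norm_num⟩
  induction a, ha using Nat.le_induction with
  | base => exact ⟨id, by simpa using ThompsonLike.id h0 h1 one_pos⟩
  | succ a ha ih =>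
    -- double `[0, 1/2]` onto `[0, 1]`; map `[1/2, 1]` onto `[1, a + 1]` through `[0, a]`
    obtain ⟨f, hf⟩ := ih
    have hdouble := ThompsonLike.affine (r := 0) (s := 1) h0 hhalf (by norm_num) 1 0
      (by norm_num) (by norm_num)
    have hstretch := ThompsonLike.affine (r := 0) (s := 1) hhalf h1 (by norm_num) 1 (-1)
      (by norm_num) (by norm_num)
    have hshift := ThompsonLike.affine (r := 1) (s := (a + 1 : ℕ)) h0 (isDyadic_natCast a)
      (by exact_mod_cast ha) 0 1 (by norm_num) (by push_cast; ring)
    exact ⟨_, hdouble.piecewise ((hstretch.comp hf).comp hshift)⟩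

theorem exists_thompsonLike (hp : IsDyadic p) (hq : IsDyadic q) (hr : IsDyadic r)
    (hs : IsDyadic s) (hpq : p < q) (hrs : r < s) : ∃ f, ThompsonLike p q r s f := by
  obtain ⟨a, N, ha, haN⟩ := (hq.sub hp).exists_eq_natCast_div (sub_pos.2 hpq)
  obtain ⟨b, M, hb, hbM⟩ := (hs.sub hr).exists_eq_natCast_div (sub_pos.2 hrs)
  have h0 : IsDyadic 0 := by exact_mod_cast isDyadic_natCast 0
  obtain ⟨f, hf⟩ := exists_thompsonLike_zero_one_natCast ha
  obtain ⟨f', hf'⟩ := hf.exists_symm h0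
  obtain ⟨g, hg⟩ := exists_thompsonLike_zero_one_natCast hb
  have hscale := ThompsonLike.affine (r := 0) (s := a) hp hq hpq N (-(2 ^ (N : ℤ) * p))
    (by ring) (by rw [← sub_eq_add_neg, ← mul_sub, haN, zpow_natCast]; field_simp)
  have hshift := ThompsonLike.affine (p := 0) (q := b) (r := r) (s := s) h0 (isDyadic_natCast b)
    (by exact_mod_cast hb) (-M) r (by ring)
    (by rw [zpow_neg, zpow_natCast, ← div_eq_inv_mul, ← hbM]; ring)
  exact ⟨_, (((hscale.comp hf').comp hg).comp hshift)⟩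

namespace InF

variable {p' q' : ℝ} {g h : Equiv.Perm ℝ}

theorem apply_eq_self (hg : InF p q g) {t : ℝ} (ht : t ∉ Ioo p q) : g t = t := by
  by_cases htpq : t ∈ Icc p q
  · rcases eq_endpoints_or_mem_Ioo_of_mem_Icc htpq with rfl | rfl | h
    · exact hg.1.1
    · exact hg.1.2.1
    · exact absurd h ht
  · exact hg.2 t htpq

theorem ext_of_eqOn (hg : InF p q g) (hh : InF p q h) (hgh : EqOn g h (Icc p q)) : g = h := by
  ext t
  by_cases ht : t ∈ Icc p q
  · exact hgh ht
  · rw [hg.2 t ht, hh.2 t ht]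

theorem mapsTo (hg : InF p q g) : MapsTo g (Icc p q) (Icc p q) := hg.1.partition.mapsTo

theorem mapsTo_Ioo (hg : InF p q g) : MapsTo g (Ioo p q) (Ioo p q) := hg.1.partition.mapsTo_Ioo

theorem isDyadic_apply (hg : InF p q g) {t : ℝ} (ht : t ∈ Icc p q) (hdt : IsDyadic t) :
    IsDyadic (g t) :=
  (hg.1.partition.isDyadic_apply_iff hg.1.partition.isDyadic_left ht).2 hdt

theorem one (hp : IsDyadic p) (hq : IsDyadic q) (hpq : p < q) : InF p q 1 :=
  ⟨ThompsonLike.id hp hq hpq, fun _ _ => rfl⟩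

theorem mul (hg : InF p q g) (hh : InF p q h) : InF p q (g * h) :=
  ⟨hh.1.comp hg.1, fun t ht => by rw [Equiv.Perm.mul_apply, hh.2 t ht, hg.2 t ht]⟩

theorem inv (hg : InF p q g) : InF p q g⁻¹ :=
  ⟨hg.1.symm hg.1.partition.isDyadic_left fun t _ => g.symm_apply_apply t,
    fun t ht => Equiv.Perm.inv_eq_iff_eq.2 (hg.2 t ht).symm⟩

theorem mono_left (hp' : IsDyadic p') (hp'p : p' ≤ p) (hg : InF p q g) : InF p' q g := by
  rcases hp'p.eq_or_lt with rfl | hlt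
  · exact hg
  refine ⟨((ThompsonLike.id hp' hg.1.partition.isDyadic_left hlt).piecewise hg.1).congr
    fun t _ => ?_, fun t ht => hg.2 t fun h => ht (Icc_subset_Icc hp'p le_rfl h)⟩
  dsimp only
  split_ifs with htp
  · exact (hg.apply_eq_self fun h => h.1.not_ge htp).symm
  · rfl

theorem mono_right (hq' : IsDyadic q') (hqq' : q ≤ q') (hg : InF p q g) : InF p q' g := by
  rcases hqq'.eq_or_lt with rfl | hlt
  · exact hg
  refine ⟨(hg.1.piecewise (ThompsonLike.id hg.1.partition.isDyadic_right hq' hlt)).congr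
    fun t _ => ?_, fun t ht => hg.2 t fun h => ht (Icc_subset_Icc le_rfl hqq' h)⟩
  dsimp only
  split_ifs with htq
  · rfl
  · exact (hg.apply_eq_self fun h => htq h.2.le).symm

theorem exists_eqOn (hf : ThompsonLike p q p q f) : ∃ g, InF p q g ∧ EqOn g f (Icc p q) := by
  classical
  let P := hf.partition
  let F := (Icc p q).piecewise f id
  have hF : EqOn F f (Icc p q) := piecewise_eqOn _ _ _
  have hinj : Function.Injective F := (injective_piecewise_iff _).2
    ⟨P.strictMonoOn.injOn, injOn_id _, fun y hy z hz (h : f y = z) => hz (h ▸ P.mapsTo hy)⟩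
  have hsurj : Function.Surjective F := by
    rw [← range_eq_univ, range_piecewise, P.surjOn.image_eq_of_mapsTo P.mapsTo, image_id,
      union_compl_self]
  refine ⟨Equiv.ofBijective F ⟨hinj, hsurj⟩, ⟨hf.congr hF.symm, fun t ht => ?_⟩, hF⟩
  exact piecewise_eq_of_notMem _ _ _ ht


theorem exists_apply_eq (hp : IsDyadic p) (hq : IsDyadic q) (hu : IsDyadic u) (hv : IsDyadic v)
    (hupq : u ∈ Ioo p q) (hvpq : v ∈ Ioo p q) : ∃ g, InF p q g ∧ g u = v := by
  obtain ⟨f₁, hf₁⟩ := exists_thompsonLike hp hu hp hv hupq.1 hvpq.1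
  obtain ⟨f₂, hf₂⟩ := exists_thompsonLike hu hq hv hq hupq.2 hvpq.2
  obtain ⟨g, hg, hgf⟩ := exists_eqOn (hf₁.piecewise hf₂)
  refine ⟨g, hg, ?_⟩
  rw [hgf (Ioo_subset_Icc_self hupq)]
  simp [hf₁.2.1]

theorem exists_eqOn_restrict (hg : InF p q g) (hu : IsDyadic u) (hv : IsDyadic v) (hpu : p ≤ u)
    (huv : u < v) (hvq : v ≤ q) (hgu : g u = u) (hgv : g v = v) :
    ∃ g', InF u v g' ∧ EqOn g' g (Icc u v) := by
  have h := hg.1.restrict hu hv hpu huv hvq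
  rw [hgu, hgv] at h
  exact exists_eqOn h

theorem exists_mul_eq_of_apply_eq_self (hg : InF p q g) (hr : IsDyadic r) (hpr : p < r)
    (hrq : r < q) (hgr : g r = r) :
    ∃ g₁ g₂, InF p r g₁ ∧ InF r q g₂ ∧ g₁ * g₂ = g := by
  have hp := hg.1.partition.isDyadic_left
  have hq := hg.1.partition.isDyadic_right
  obtain ⟨g₁, hg₁, e₁⟩ := hg.exists_eqOn_restrict hp hr le_rfl hpr hrq.le hg.1.1 hgr
  obtain ⟨g₂, hg₂, e₂⟩ := hg.exists_eqOn_restrict hr hq hpr.le hrq le_rfl hgr hg.1.2.1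
  refine ⟨g₁, g₂, hg₁, hg₂,
    ext_of_eqOn ((hg₁.mono_right hq hrq.le).mul (hg₂.mono_left hp hpr.le)) hg fun t ht => ?_⟩
  rw [Equiv.Perm.mul_apply]
  rcases le_total t r with htr | hrt
  · rw [hg₂.apply_eq_self fun h => htr.not_gt h.1, e₁ ⟨ht.1, htr⟩]
  · have hmem := hg₂.mapsTo ⟨hrt, ht.2⟩
    rw [hg₁.apply_eq_self fun h => hmem.1.not_gt h.2, e₂ ⟨hrt, ht.2⟩]

end InF

def subgroupF (hp : IsDyadic p) (hq : IsDyadic q) (hpq : p < q) : Subgroup (Equiv.Perm ℝ) where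
  carrier := {g | InF p q g}
  one_mem' := InF.one hp hq hpq
  mul_mem' := InF.mul
  inv_mem' := InF.inv

theorem exists_inF_union_apply_eq {a b c d : ℝ} (ha : IsDyadic a) (hb : IsDyadic b)
    (hc : IsDyadic c) (hd : IsDyadic d) (hab : a < b) (hcd : c < d) (hu : IsDyadic u)
    (hv : IsDyadic v) (hud : u ∈ Ioo a d) (hvbc : v ∈ Ioo b c) :
    ∃ g, (InF a c g ∨ InF b d g) ∧ g u = v := by
  rcases lt_or_ge u c with huc | hcu
  · obtain ⟨g, hg, hgu⟩ :=
      InF.exists_apply_eq ha hc hu hv ⟨hud.1, huc⟩ ⟨hab.trans hvbc.1, hvbc.2⟩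
    exact ⟨g, Or.inl hg, hgu⟩
  · obtain ⟨g, hg, hgu⟩ := InF.exists_apply_eq hb hd hu hv
      ⟨hvbc.1.trans (hvbc.2.trans_le hcu), hud.2⟩ ⟨hvbc.1, hvbc.2.trans hcd⟩
    exact ⟨g, Or.inr hg, hgu⟩

theorem statement4_general (a b c d : ℝ) (ha : IsDyadic a) (hb : IsDyadic b)
    (hc : IsDyadic c) (hd : IsDyadic d) (hab : a < b) (hbc : b < c) (hcd : c < d) :
    (Subgroup.closure ({g | InF a c g} ∪ {g | InF b d g}) : Set (Equiv.Perm ℝ)) =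
      {g | InF a d g} := by
  set H := Subgroup.closure ({g | InF a c g} ∪ {g | InF b d g})
  have hAC : ∀ g, InF a c g → g ∈ H := fun g hg => Subgroup.subset_closure (Or.inl hg)
  have hBD : ∀ g, InF b d g → g ∈ H := fun g hg => Subgroup.subset_closure (Or.inr hg)
  have hle : H ≤ subgroupF ha hd (hab.trans (hbc.trans hcd)) := Subgroup.closure_le _ |>.2 <|
    union_subset (fun g hg => hg.mono_right hd hcd.le) fun g hg => hg.mono_left ha hab.le
  refine Subset.antisymm (fun g hg => hle hg) fun g (hg : InF a d g) => ?_
  obtain ⟨r, hr, hbr, hrc⟩ := exists_isDyadic_btwn hbc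
  have hrad : r ∈ Ioo a d := ⟨hab.trans hbr, hrc.trans hcd⟩
  obtain ⟨P, hP, hPg⟩ := exists_inF_union_apply_eq ha hb hc hd hab hcd
    (hg.isDyadic_apply (Ioo_subset_Icc_self hrad) hr) hr (hg.mapsTo_Ioo hrad) ⟨hbr, hrc⟩
  have hPH : P ∈ H := hP.elim (hAC P) (hBD P)
  obtain ⟨g₁, g₂, hg₁, hg₂, hPg'⟩ :=
    ((hle hPH : InF a d P).mul hg).exists_mul_eq_of_apply_eq_self hr hrad.1 hrad.2 hPg
  rw [← inv_mul_cancel_left P g, ← hPg']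
  exact H.mul_mem (H.inv_mem hPH)
    (H.mul_mem (hAC _ (hg₁.mono_right hc hrc.le)) (hBD _ (hg₂.mono_left hb hbr.le)))

theorem statement4 (a b c d : ℝ) (ha : IsDyadic a) (hb : IsDyadic b)
    (hc : IsDyadic c) (hd : IsDyadic d) (hab : a < b) (hbc : b < c) (hcd : c < d)
    (h0 : 0 ≤ a) (h1 : d ≤ 1) :
    (Subgroup.closure ({g | InF a c g} ∪ {g | InF b d g}) : Set (Equiv.Perm ℝ)) =
      {g | InF a d g} :=
  statement4_general a b c d ha hb hc hd hab hbc hcd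
end
end

section
/- Let k ≥ 2 and let [r_1,s_1], …, [r_k,s_k] be closed intervals with dyadic rational endpoints such that the union of the open intervals (r_i,s_i) equals (r,s). Then F_{[r,s]} = ⟨F_{[r_1,s_1]}, …, F_{[r_k,s_k]}⟩. -/
noncomputable section

namespace IsDyadic

lemma int (a : ℤ) : IsDyadic (a : ℝ) := ⟨a, 0, by simp⟩

lemma zero : IsDyadic 0 := ⟨0, 0, by simp⟩

lemma one : IsDyadic 1 := ⟨1, 0, by simp⟩

lemma add_s5 {x y : ℝ} (hx : IsDyadic x) (hy : IsDyadic y) : IsDyadic (x + y) := by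
  obtain ⟨a, n, rfl⟩ := hx
  obtain ⟨b, m, rfl⟩ := hy
  refine ⟨a * 2 ^ m + b * 2 ^ n, n + m, ?_⟩
  have h1 : (2:ℝ) ^ n ≠ 0 := by positivity
  have h2 : (2:ℝ) ^ m ≠ 0 := by positivity
  push_cast
  rw [div_add_div _ _ h1 h2, pow_add]
  ring

lemma neg_s5 {x : ℝ} (hx : IsDyadic x) : IsDyadic (-x) := by
  obtain ⟨a, n, rfl⟩ := hx
  exact ⟨-a, n, by push_cast; ring⟩

lemma sub_s5 {x y : ℝ} (hx : IsDyadic x) (hy : IsDyadic y) : IsDyadic (x - y) := by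
  simpa [sub_eq_add_neg] using hx.add_s5 hy.neg_s5

lemma zpow_mul {x : ℝ} (k : ℤ) (hx : IsDyadic x) : IsDyadic ((2:ℝ) ^ k * x) := by
  obtain ⟨a, n, rfl⟩ := hx
  rcases k with m | m
  · refine ⟨2 ^ m * a, n, ?_⟩
    push_cast
    field_simp
    rw [Int.ofNat_eq_natCast, zpow_natCast]; ring
  · refine ⟨a, n + (m + 1), ?_⟩
    have h1 : (2:ℝ) ^ (n + (m+1)) ≠ 0 := by positivity
    rw [zpow_negSucc, inv_mul_eq_div, div_div]
    norm_num [pow_add]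

lemma dense {u v : ℝ} (huv : u < v) : ∃ x : ℝ, IsDyadic x ∧ u < x ∧ x < v := by
  obtain ⟨n, hn⟩ := pow_unbounded_of_one_lt (v - u)⁻¹ (by norm_num : (1:ℝ) < 2)
  have h2n : (0:ℝ) < 2 ^ n := by positivity
  have hlt : 1 / 2 ^ n < v - u := by
    rw [div_lt_iff₀ h2n]
    have : (v - u)⁻¹ < 2 ^ n := hn
    have hvu : 0 < v - u := by linarith
    calc (1:ℝ) = (v-u) * (v-u)⁻¹ := by field_simp
    _ < (v - u) * 2 ^ n := by exact mul_lt_mul_of_pos_left this hvu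
  refine ⟨(⌊u * 2 ^ n⌋ + 1) / 2 ^ n, ⟨⌊u * 2 ^ n⌋ + 1, n, by push_cast; ring⟩, ?_, ?_⟩
  · rw [lt_div_iff₀ h2n]
    have := Int.lt_floor_add_one (u * 2 ^ n)
    push_cast
    linarith
  · rw [div_lt_iff₀ h2n]
    have := Int.floor_le (u * 2 ^ n)
    have : (⌊u * 2 ^ n⌋ : ℝ) + 1 ≤ u * 2 ^ n + 1 := by linarith
    have hfin : u * 2 ^ n + 1 < v * 2 ^ n := by
      have := (div_lt_iff₀ h2n).mp hlt
      nlinarith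
    push_cast
    linarith

end IsDyadic

/-- `f` is affine with slope a power of 2 on `[a,b]`. -/
def Aff (f : ℝ → ℝ) (a b : ℝ) : Prop :=
  ∃ k : ℤ, ∀ t ∈ Set.Icc a b, f t = f a + (2:ℝ) ^ k * (t - a)

/-- Finset-based form of `ThompsonLike`. -/
structure TLF (p q r s : ℝ) (f : ℝ → ℝ) (D : Finset ℝ) : Prop where
  fp : f p = r
  fq : f q = s
  plq : p < q
  pD : p ∈ D
  qD : q ∈ D
  dy : ∀ d ∈ D, IsDyadic d
  subI : ∀ d ∈ D, d ∈ Set.Icc p q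
  aff : ∀ a ∈ D, ∀ b ∈ D, a < b → (∀ d ∈ D, d ∉ Set.Ioo a b) → Aff f a b

namespace TLF

variable {p q r s : ℝ} {f : ℝ → ℝ} {D : Finset ℝ}

lemma aff_avoid (h : TLF p q r s f D) {a b : ℝ} (ha : a ∈ Set.Icc p q)
    (hb : b ∈ Set.Icc p q) (hab : a < b) (hav : ∀ d ∈ D, d ∉ Set.Ioo a b) :
    Aff f a b := by
  classical
  have hpl : p ∈ D.filter (fun d => d ≤ a) := Finset.mem_filter.2 ⟨h.pD, ha.1⟩
  have hqr : q ∈ D.filter (fun d => b ≤ d) := Finset.mem_filter.2 ⟨h.qD, hb.2⟩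
  obtain ⟨A, hAmem, hAmax⟩ : ∃ A ∈ D.filter (fun d => d ≤ a),
      ∀ e ∈ D.filter (fun d => d ≤ a), e ≤ A :=
    ⟨_, Finset.max'_mem _ ⟨p, hpl⟩, fun e he => Finset.le_max' _ e he⟩
  obtain ⟨B, hBmem, hBmin⟩ : ∃ B ∈ D.filter (fun d => b ≤ d),
      ∀ e ∈ D.filter (fun d => b ≤ d), B ≤ e :=
    ⟨_, Finset.min'_mem _ ⟨q, hqr⟩, fun e he => Finset.min'_le _ e he⟩
  have hAD : A ∈ D := (Finset.mem_filter.1 hAmem).1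
  have hBD : B ∈ D := (Finset.mem_filter.1 hBmem).1
  have hAa : A ≤ a := (Finset.mem_filter.1 hAmem).2
  have hbB : b ≤ B := (Finset.mem_filter.1 hBmem).2
  have hAB : A < B := lt_of_le_of_lt hAa (lt_of_lt_of_le hab hbB)
  have hcons : ∀ d ∈ D, d ∉ Set.Ioo A B := by
    intro d hd hdm
    rcases le_or_gt d a with h1 | h1
    · exact absurd (hAmax d (Finset.mem_filter.2 ⟨hd, h1⟩)) (not_le.2 hdm.1)
    rcases lt_or_ge d b with h2 | h2
    · exact hav d hd ⟨h1, h2⟩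
    · exact absurd (hBmin d (Finset.mem_filter.2 ⟨hd, h2⟩)) (not_le.2 hdm.2)
  obtain ⟨k, hk⟩ := h.aff A hAD B hBD hAB hcons
  refine ⟨k, fun t ht => ?_⟩
  have hta : t ∈ Set.Icc A B := ⟨le_trans hAa ht.1, le_trans ht.2 hbB⟩
  have haa : a ∈ Set.Icc A B := ⟨hAa, le_trans (le_of_lt hab) hbB⟩
  have e1 := hk t hta
  have e2 := hk a haa
  rw [e1, e2]; ring

lemma lt_of_avoid (h : TLF p q r s f D) {a b : ℝ} (ha : a ∈ Set.Icc p q)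
    (hb : b ∈ Set.Icc p q) (hab : a < b) (hav : ∀ d ∈ D, d ∉ Set.Ioo a b) :
    f a < f b := by
  obtain ⟨k, hk⟩ := h.aff_avoid ha hb hab hav
  have := hk b ⟨le_of_lt hab, le_rfl⟩
  have hpos : (0:ℝ) < (2:ℝ) ^ k := zpow_pos (by norm_num) k
  nlinarith [this]

lemma lt_aux (h : TLF p q r s f D) :
    ∀ N : ℕ, ∀ a b : ℝ, a ∈ Set.Icc p q → b ∈ Set.Icc p q → a < b →
      (D.filter (fun d => a < d ∧ d < b)).card ≤ N → f a < f b := by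
  classical
  intro N
  induction N with
  | zero =>
    intro a b ha hb hab hcard
    refine h.lt_of_avoid ha hb hab (fun d hd hdm => ?_)
    have hmem : d ∈ D.filter (fun d => a < d ∧ d < b) :=
      Finset.mem_filter.2 ⟨hd, hdm.1, hdm.2⟩
    have := Finset.card_pos.2 ⟨d, hmem⟩
    omega
  | succ N ih =>
    intro a b ha hb hab hcard
    by_cases hz : D.filter (fun d => a < d ∧ d < b) = ∅
    · refine h.lt_of_avoid ha hb hab (fun d hd hdm => ?_)
      have hmem : d ∈ D.filter (fun d => a < d ∧ d < b) :=
        Finset.mem_filter.2 ⟨hd, hdm.1, hdm.2⟩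
      simp [hz] at hmem
    · obtain ⟨d, hd⟩ := Finset.nonempty_iff_ne_empty.2 hz
      have hdD : d ∈ D := (Finset.mem_filter.1 hd).1
      have had : a < d := (Finset.mem_filter.1 hd).2.1
      have hdb : d < b := (Finset.mem_filter.1 hd).2.2
      have hdI : d ∈ Set.Icc p q := h.subI d hdD
      have hsub1 : D.filter (fun e => a < e ∧ e < d) ⊆
          (D.filter (fun e => a < e ∧ e < b)).erase d := by
        intro e he
        rcases Finset.mem_filter.1 he with ⟨heD, he1, he2⟩
        exact Finset.mem_erase.2 ⟨ne_of_lt he2, Finset.mem_filter.2 ⟨heD, he1, lt_trans he2 hdb⟩⟩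
      have hsub2 : D.filter (fun e => d < e ∧ e < b) ⊆
          (D.filter (fun e => a < e ∧ e < b)).erase d := by
        intro e he
        rcases Finset.mem_filter.1 he with ⟨heD, he1, he2⟩
        exact Finset.mem_erase.2 ⟨(ne_of_lt he1).symm,
          Finset.mem_filter.2 ⟨heD, lt_trans had he1, he2⟩⟩
      have hcd : ((D.filter (fun e => a < e ∧ e < b)).erase d).card ≤ N := by
        have := Finset.card_erase_of_mem hd
        omega
      exact lt_trans (ih a d ha hdI had (le_trans (Finset.card_le_card hsub1) hcd))
        (ih d b hdI hb hdb (le_trans (Finset.card_le_card hsub2) hcd))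

lemma smono (h : TLF p q r s f D) : StrictMonoOn f (Set.Icc p q) := by
  classical
  intro a ha b hb hab
  exact h.lt_aux (D.filter (fun d => a < d ∧ d < b)).card a b ha hb hab le_rfl

lemma mono (h : TLF p q r s f D) : MonotoneOn f (Set.Icc p q) := h.smono.monotoneOn

lemma rls (h : TLF p q r s f D) : r < s := by
  have := h.smono (Set.left_mem_Icc.2 (le_of_lt h.plq)) (Set.right_mem_Icc.2 (le_of_lt h.plq)) h.plq
  rwa [h.fp, h.fq] at this

lemma maps_to (h : TLF p q r s f D) {t : ℝ} (ht : t ∈ Set.Icc p q) :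
    f t ∈ Set.Icc r s := by
  have hpq : p ≤ q := le_of_lt h.plq
  constructor
  · rw [← h.fp]; exact h.mono (Set.left_mem_Icc.2 hpq) ht ht.1
  · rw [← h.fq]; exact h.mono ht (Set.right_mem_Icc.2 hpq) ht.2

lemma dyadic_val_mem (h : TLF p q r s f D) (hr : IsDyadic r) :
    ∀ d ∈ D, IsDyadic (f d) := by
  classical
  suffices H : ∀ N : ℕ, ∀ d ∈ D, (D.filter (fun e => e < d)).card ≤ N → IsDyadic (f d) by
    intro d hd; exact H _ d hd le_rfl
  intro N
  induction N with
  | zero =>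
    intro d hd hcard
    have hdp : d = p := by
      by_contra hne
      have hplt : p < d := lt_of_le_of_ne (h.subI d hd).1 (Ne.symm hne)
      have : p ∈ D.filter (fun e => e < d) := Finset.mem_filter.2 ⟨h.pD, hplt⟩
      have := Finset.card_pos.2 ⟨p, this⟩
      omega
    rw [hdp, h.fp]; exact hr
  | succ N ih =>
    intro d hd hcard
    by_cases hz : D.filter (fun e => e < d) = ∅
    · have hdp : d = p := by
        by_contra hne
        have hplt : p < d := lt_of_le_of_ne (h.subI d hd).1 (Ne.symm hne)
        have : p ∈ D.filter (fun e => e < d) := Finset.mem_filter.2 ⟨h.pD, hplt⟩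
        simp [hz] at this
      rw [hdp, h.fp]; exact hr
    · obtain ⟨e0, he0⟩ := Finset.nonempty_iff_ne_empty.2 hz
      obtain ⟨A, hAmem, hAmax⟩ : ∃ A ∈ D.filter (fun e => e < d),
          ∀ e ∈ D.filter (fun e => e < d), e ≤ A :=
        ⟨_, Finset.max'_mem _ ⟨e0, he0⟩, fun e he => Finset.le_max' _ e he⟩
      have hAD : A ∈ D := (Finset.mem_filter.1 hAmem).1
      have hAd : A < d := (Finset.mem_filter.1 hAmem).2
      have hav : ∀ e ∈ D, e ∉ Set.Ioo A d := by
        intro e he hem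
        exact absurd (hAmax e (Finset.mem_filter.2 ⟨he, hem.2⟩)) (not_le.2 hem.1)
      obtain ⟨k, hk⟩ := h.aff A hAD d hd hAd hav
      have hfA : IsDyadic (f A) := by
        refine ih A hAD ?_
        have hsub : D.filter (fun e => e < A) ⊆ (D.filter (fun e => e < d)).erase A := by
          intro e he
          rcases Finset.mem_filter.1 he with ⟨heD, he1⟩
          exact Finset.mem_erase.2 ⟨ne_of_lt he1, Finset.mem_filter.2 ⟨heD, lt_trans he1 hAd⟩⟩
        have := Finset.card_erase_of_mem hAmem
        have := Finset.card_le_card hsub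
        omega
      have := hk d ⟨le_of_lt hAd, le_rfl⟩
      rw [this]
      exact hfA.add_s5 (IsDyadic.zpow_mul k ((h.dy d hd).sub_s5 (h.dy A hAD)))

/-- Locate a point between neighbouring breakpoints; gives the affine formula at `t`. -/
lemma locate (h : TLF p q r s f D) {t : ℝ} (ht : t ∈ Set.Icc p q) (htD : t ∉ D) :
    ∃ A ∈ D, ∃ B ∈ D, A < t ∧ t < B ∧ (∀ d ∈ D, d ∉ Set.Ioo A B) := by
  classical
  have hpl : p ∈ D.filter (fun d => d ≤ t) := Finset.mem_filter.2 ⟨h.pD, ht.1⟩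
  have hqr : q ∈ D.filter (fun d => t ≤ d) := Finset.mem_filter.2 ⟨h.qD, ht.2⟩
  obtain ⟨A, hAmem, hAmax⟩ : ∃ A ∈ D.filter (fun d => d ≤ t),
      ∀ e ∈ D.filter (fun d => d ≤ t), e ≤ A :=
    ⟨_, Finset.max'_mem _ ⟨p, hpl⟩, fun e he => Finset.le_max' _ e he⟩
  obtain ⟨B, hBmem, hBmin⟩ : ∃ B ∈ D.filter (fun d => t ≤ d),
      ∀ e ∈ D.filter (fun d => t ≤ d), B ≤ e :=
    ⟨_, Finset.min'_mem _ ⟨q, hqr⟩, fun e he => Finset.min'_le _ e he⟩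
  have hAD : A ∈ D := (Finset.mem_filter.1 hAmem).1
  have hBD : B ∈ D := (Finset.mem_filter.1 hBmem).1
  have hAt : A < t := lt_of_le_of_ne (Finset.mem_filter.1 hAmem).2
    (fun hEq => htD (hEq ▸ hAD))
  have htB : t < B := lt_of_le_of_ne (Finset.mem_filter.1 hBmem).2
    (fun hEq => htD (hEq ▸ hBD))
  refine ⟨A, hAD, B, hBD, hAt, htB, fun d hd hdm => ?_⟩
  rcases le_or_gt d t with h1 | h1
  · exact absurd (hAmax d (Finset.mem_filter.2 ⟨hd, h1⟩)) (not_le.2 hdm.1)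
  · exact absurd (hBmin d (Finset.mem_filter.2 ⟨hd, le_of_lt h1⟩)) (not_le.2 hdm.2)

lemma dyadic_val (h : TLF p q r s f D) (hr : IsDyadic r) {t : ℝ}
    (ht : t ∈ Set.Icc p q) (hd : IsDyadic t) : IsDyadic (f t) := by
  classical
  by_cases htD : t ∈ D
  · exact h.dyadic_val_mem hr t htD
  · obtain ⟨A, hAD, B, hBD, hAt, htB, hav⟩ := h.locate ht htD
    obtain ⟨k, hk⟩ := h.aff A hAD B hBD (lt_trans hAt htB) hav
    rw [hk t ⟨le_of_lt hAt, le_of_lt htB⟩]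
    exact (h.dyadic_val_mem hr A hAD).add_s5
      (IsDyadic.zpow_mul k (hd.sub_s5 (h.dy A hAD)))

lemma dyadic_arg (h : TLF p q r s f D) (hr : IsDyadic r) {t : ℝ}
    (ht : t ∈ Set.Icc p q) (hd : IsDyadic (f t)) : IsDyadic t := by
  classical
  by_cases htD : t ∈ D
  · exact h.dy t htD
  · obtain ⟨A, hAD, B, hBD, hAt, htB, hav⟩ := h.locate ht htD
    obtain ⟨k, hk⟩ := h.aff A hAD B hBD (lt_trans hAt htB) hav
    have := hk t ⟨le_of_lt hAt, le_of_lt htB⟩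
    have ht' : t = A + (2:ℝ) ^ (-k) * (f t - f A) := by
      have h2 : (2:ℝ) ^ k ≠ 0 := by positivity
      have h3 : (2:ℝ) ^ (-k) * (2:ℝ) ^ k = 1 := by
        rw [← zpow_add₀ (by norm_num : (2:ℝ) ≠ 0)]; simp
      have : f t - f A = (2:ℝ) ^ k * (t - A) := by linarith [this]
      rw [this]
      have : (2:ℝ) ^ (-k) * ((2:ℝ) ^ k * (t - A)) = t - A := by
        rw [← mul_assoc, h3, one_mul]
      rw [this]; ring
    rw [ht']
    exact (h.dy A hAD).add_s5
      (IsDyadic.zpow_mul (-k) (hd.sub_s5 (h.dyadic_val_mem hr A hAD)))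

lemma surjOn (h : TLF p q r s f D) {y : ℝ} (hy : y ∈ Set.Icc r s) :
    ∃ t ∈ Set.Icc p q, f t = y := by
  classical
  have hpl : p ∈ D.filter (fun d => f d ≤ y) := by
    refine Finset.mem_filter.2 ⟨h.pD, ?_⟩; rw [h.fp]; exact hy.1
  have hqr : q ∈ D.filter (fun d => y ≤ f d) := by
    refine Finset.mem_filter.2 ⟨h.qD, ?_⟩; rw [h.fq]; exact hy.2
  obtain ⟨A, hAmem, hAmax⟩ : ∃ A ∈ D.filter (fun d => f d ≤ y),
      ∀ e ∈ D.filter (fun d => f d ≤ y), e ≤ A :=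
    ⟨_, Finset.max'_mem _ ⟨p, hpl⟩, fun e he => Finset.le_max' _ e he⟩
  have hAD : A ∈ D := (Finset.mem_filter.1 hAmem).1
  have hfAy : f A ≤ y := (Finset.mem_filter.1 hAmem).2
  rcases eq_or_lt_of_le hfAy with hEq | hlt
  · exact ⟨A, h.subI A hAD, hEq⟩
  obtain ⟨B, hBmem, hBmin⟩ : ∃ B ∈ D.filter (fun d => y ≤ f d),
      ∀ e ∈ D.filter (fun d => y ≤ f d), B ≤ e :=
    ⟨_, Finset.min'_mem _ ⟨q, hqr⟩, fun e he => Finset.min'_le _ e he⟩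
  have hBD : B ∈ D := (Finset.mem_filter.1 hBmem).1
  have hyfB : y ≤ f B := (Finset.mem_filter.1 hBmem).2
  have hAB : A < B := by
    rcases lt_trichotomy A B with h1 | h1 | h1
    · exact h1
    · exfalso; rw [h1] at hlt; linarith
    · exfalso
      have := h.smono (h.subI B hBD) (h.subI A hAD) h1
      linarith
  have hav : ∀ d ∈ D, d ∉ Set.Ioo A B := by
    intro d hd hdm
    rcases le_or_gt (f d) y with h1 | h1
    · exact absurd (hAmax d (Finset.mem_filter.2 ⟨hd, h1⟩)) (not_le.2 hdm.1)
    · exact absurd (hBmin d (Finset.mem_filter.2 ⟨hd, le_of_lt h1⟩)) (not_le.2 hdm.2)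
  obtain ⟨k, hk⟩ := h.aff A hAD B hBD hAB hav
  have hkpos : (0:ℝ) < (2:ℝ) ^ k := zpow_pos (by norm_num) k
  have hfB := hk B ⟨le_of_lt hAB, le_rfl⟩
  set t := A + (2:ℝ) ^ (-k) * (y - f A) with hT
  have h3 : (2:ℝ) ^ k * (2:ℝ) ^ (-k) = 1 := by
    rw [← zpow_add₀ (by norm_num : (2:ℝ) ≠ 0)]; simp
  have hknpos : (0:ℝ) < (2:ℝ) ^ (-k) := zpow_pos (by norm_num) (-k)
  have htmem : t ∈ Set.Icc A B := by
    constructor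
    · have : (0:ℝ) ≤ (2:ℝ) ^ (-k) * (y - f A) := by nlinarith
      linarith [this]
    · have h5 : (2:ℝ) ^ (-k) * (y - f A) ≤ (2:ℝ) ^ (-k) * (f B - f A) := by nlinarith
      have h6 : (2:ℝ) ^ (-k) * (f B - f A) = B - A := by
        rw [hfB]
        have e : f A + (2:ℝ)^k*(B-A) - f A = (2:ℝ)^k*(B-A) := by ring
        rw [e, ← mul_assoc, mul_comm ((2:ℝ)^(-k)) ((2:ℝ)^k), h3, one_mul]
      linarith [h5, h6]
  refine ⟨t, ?_, ?_⟩
  · exact ⟨le_trans (h.subI A hAD).1 htmem.1, le_trans htmem.2 (h.subI B hBD).2⟩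
  · rw [hk t htmem, hT]
    have : (2:ℝ) ^ k * (A + (2:ℝ)^(-k) * (y - f A) - A) = y - f A := by
      rw [add_sub_cancel_left, ← mul_assoc, h3, one_mul]
    rw [this]; ring

lemma congr (h : TLF p q r s f D) {f' : ℝ → ℝ}
    (hff' : ∀ t ∈ Set.Icc p q, f t = f' t) : TLF p q r s f' D := by
  refine ⟨?_, ?_, h.plq, h.pD, h.qD, h.dy, h.subI, ?_⟩
  · rw [← hff' p (Set.left_mem_Icc.2 (le_of_lt h.plq))]; exact h.fp
  · rw [← hff' q (Set.right_mem_Icc.2 (le_of_lt h.plq))]; exact h.fq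
  · intro a ha b hb hab hav
    obtain ⟨k, hk⟩ := h.aff a ha b hb hab hav
    refine ⟨k, fun t ht => ?_⟩
    have hsub : Set.Icc a b ⊆ Set.Icc p q :=
      Set.Icc_subset_Icc (h.subI a ha).1 (h.subI b hb).2
    rw [← hff' t (hsub ht), ← hff' a (hsub ⟨le_rfl, le_of_lt hab⟩)]
    exact hk t ht

lemma restrict (h : TLF p q r s f D) {c d : ℝ} (hc : c ∈ Set.Icc p q)
    (hd : d ∈ Set.Icc p q) (hcd : c < d) (hcD : IsDyadic c) (hdD : IsDyadic d) :
    TLF c d (f c) (f d) f (insert c (insert d (D.filter (fun e => c ≤ e ∧ e ≤ d)))) := by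
  classical
  have hmem : ∀ e ∈ insert c (insert d (D.filter (fun e => c ≤ e ∧ e ≤ d))),
      e ∈ Set.Icc c d ∧ IsDyadic e := by
    intro e he
    rcases Finset.mem_insert.1 he with rfl | he
    · exact ⟨⟨le_rfl, le_of_lt hcd⟩, hcD⟩
    rcases Finset.mem_insert.1 he with rfl | he
    · exact ⟨⟨le_of_lt hcd, le_rfl⟩, hdD⟩
    · rcases Finset.mem_filter.1 he with ⟨heD, h1, h2⟩
      exact ⟨⟨h1, h2⟩, h.dy e heD⟩
  refine ⟨rfl, rfl, hcd, Finset.mem_insert_self _ _,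
    Finset.mem_insert.2 (Or.inr (Finset.mem_insert_self _ _)),
    fun e he => (hmem e he).2, fun e he => (hmem e he).1, ?_⟩
  intro a ha b hb hab hav
  have haI := (hmem a ha).1
  have hbI := (hmem b hb).1
  refine h.aff_avoid ⟨le_trans hc.1 haI.1, le_trans haI.2 hd.2⟩
    ⟨le_trans hc.1 hbI.1, le_trans hbI.2 hd.2⟩ hab ?_
  intro e he hem
  have heI : e ∈ Set.Icc c d := ⟨le_trans haI.1 (le_of_lt hem.1),
    le_trans (le_of_lt hem.2) hbI.2⟩
  exact hav e (Finset.mem_insert.2 (Or.inr (Finset.mem_insert.2 (Or.inr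
    (Finset.mem_filter.2 ⟨he, heI.1, heI.2⟩))))) hem

lemma glue {w v : ℝ} {g : ℝ → ℝ} {Dg : Finset ℝ} (hf : TLF p q r s f D)
    (hg : TLF q w s v g Dg) :
    TLF p w r v (fun t => if t ≤ q then f t else g t) (D ∪ Dg) := by
  classical
  have hpq := hf.plq
  have hqw := hg.plq
  have hfq : f q = g q := by rw [hf.fq, hg.fp]
  refine ⟨?_, ?_, lt_trans hpq hqw, Finset.mem_union_left _ hf.pD,
    Finset.mem_union_right _ hg.qD, ?_, ?_, ?_⟩
  · simp only [if_pos (le_of_lt hpq)]; exact hf.fp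
  · simp only [if_neg (not_le.2 hqw)]; exact hg.fq
  · intro e he
    rcases Finset.mem_union.1 he with he | he
    · exact hf.dy e he
    · exact hg.dy e he
  · intro e he
    rcases Finset.mem_union.1 he with he | he
    · exact ⟨(hf.subI e he).1, le_trans (hf.subI e he).2 (le_of_lt hqw)⟩
    · exact ⟨le_trans (le_of_lt hpq) (hg.subI e he).1, (hg.subI e he).2⟩
  · intro a ha b hb hab hav
    have hqmem : q ∈ D ∪ Dg := Finset.mem_union_left _ hf.qD
    have hcase : b ≤ q ∨ q ≤ a := by
      by_contra hcon
      push_neg at hcon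
      exact hav q hqmem ⟨hcon.2, hcon.1⟩
    rcases hcase with hcase | hcase
    · -- left piece
      have haI : a ∈ Set.Icc p q := by
        rcases Finset.mem_union.1 ha with h1 | h1
        · exact hf.subI a h1
        · exact absurd (lt_of_lt_of_le hab hcase) (not_lt.2 (hg.subI a h1).1)
      have hbI : b ∈ Set.Icc p q := by
        rcases Finset.mem_union.1 hb with h1 | h1
        · exact hf.subI b h1
        · exact ⟨le_trans haI.1 (le_of_lt hab), hcase⟩
      obtain ⟨k, hk⟩ := hf.aff_avoid haI hbI hab
        (fun e he hem => hav e (Finset.mem_union_left _ he) hem)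
      refine ⟨k, fun t ht => ?_⟩
      have htq : t ≤ q := le_trans ht.2 hcase
      have haq : a ≤ q := le_trans (le_of_lt hab) hcase
      show (if t ≤ q then f t else g t) = (if a ≤ q then f a else g a) + (2:ℝ)^k * (t - a)
      rw [if_pos htq, if_pos haq]
      exact hk t ht
    · -- right piece
      have haI : a ∈ Set.Icc q w := by
        rcases Finset.mem_union.1 ha with h1 | h1
        · exact ⟨hcase, le_trans (hf.subI a h1).2 (le_of_lt hqw)⟩
        · exact hg.subI a h1
      have hbI : b ∈ Set.Icc q w := by
        rcases Finset.mem_union.1 hb with h1 | h1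
        · exact absurd (lt_of_le_of_lt hcase hab) (not_lt.2 (hf.subI b h1).2)
        · exact hg.subI b h1
      obtain ⟨k, hk⟩ := hg.aff_avoid haI hbI hab
        (fun e he hem => hav e (Finset.mem_union_right _ he) hem)
      have heq : ∀ t, q ≤ t → (if t ≤ q then f t else g t) = g t := by
        intro t hqt
        by_cases htq : t ≤ q
        · have : t = q := le_antisymm htq hqt
          subst this
          simp only [if_pos le_rfl]; exact hfq
        · simp only [if_neg htq]
      refine ⟨k, fun t ht => ?_⟩
      show (if t ≤ q then f t else g t) = (if a ≤ q then f a else g a) + (2:ℝ)^k * (t - a)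
      rw [heq t (le_trans haI.1 ht.1), heq a haI.1]
      exact hk t ht

lemma comp {u v : ℝ} {g : ℝ → ℝ} {Dg : Finset ℝ} (hf : TLF p q r s f D)
    (hg : TLF r s u v g Dg) (hr : IsDyadic r) :
    ∃ E : Finset ℝ, TLF p q u v (fun t => g (f t)) E := by
  classical
  set finv : ℝ → ℝ := fun e =>
    if he : e ∈ Set.Icc r s then Classical.choose (hf.surjOn he) else p with hfinv
  have hfinvI : ∀ e ∈ Set.Icc r s, finv e ∈ Set.Icc p q ∧ f (finv e) = e := by
    intro e he
    have := Classical.choose_spec (hf.surjOn he)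
    simp only [hfinv, dif_pos he]
    exact ⟨this.1, this.2⟩
  refine ⟨D ∪ Dg.image finv, ?_, ?_, hf.plq, Finset.mem_union_left _ hf.pD,
    Finset.mem_union_left _ hf.qD, ?_, ?_, ?_⟩
  · show g (f p) = u
    rw [hf.fp, hg.fp]
  · show g (f q) = v
    rw [hf.fq, hg.fq]
  · intro e he
    rcases Finset.mem_union.1 he with he | he
    · exact hf.dy e he
    · obtain ⟨e0, he0, rfl⟩ := Finset.mem_image.1 he
      have heI := hg.subI e0 he0
      have := hfinvI e0 heI
      exact hf.dyadic_arg hr this.1 (by rw [this.2]; exact hg.dy e0 he0)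
  · intro e he
    rcases Finset.mem_union.1 he with he | he
    · exact hf.subI e he
    · obtain ⟨e0, he0, rfl⟩ := Finset.mem_image.1 he
      exact (hfinvI e0 (hg.subI e0 he0)).1
  · intro a ha b hb hab hav
    have haI : a ∈ Set.Icc p q := by
      rcases Finset.mem_union.1 ha with h1 | h1
      · exact hf.subI a h1
      · obtain ⟨e0, he0, rfl⟩ := Finset.mem_image.1 h1
        exact (hfinvI e0 (hg.subI e0 he0)).1
    have hbI : b ∈ Set.Icc p q := by
      rcases Finset.mem_union.1 hb with h1 | h1
      · exact hf.subI b h1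
      · obtain ⟨e0, he0, rfl⟩ := Finset.mem_image.1 h1
        exact (hfinvI e0 (hg.subI e0 he0)).1
    obtain ⟨k, hk⟩ := hf.aff_avoid haI hbI hab
      (fun e he hem => hav e (Finset.mem_union_left _ he) hem)
    have hfab : f a < f b := hf.smono haI hbI hab
    have hfaI := hf.maps_to haI
    have hfbI := hf.maps_to hbI
    have havg : ∀ e ∈ Dg, e ∉ Set.Ioo (f a) (f b) := by
      intro e he hem
      have heI : e ∈ Set.Icc r s := hg.subI e he
      obtain ⟨htI, hfe⟩ := hfinvI e heI
      have h1 : a < finv e := by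
        by_contra hcon
        push_neg at hcon
        have := hf.mono htI haI hcon
        rw [hfe] at this
        exact absurd this (not_le.2 hem.1)
      have h2 : finv e < b := by
        by_contra hcon
        push_neg at hcon
        have := hf.mono hbI htI hcon
        rw [hfe] at this
        exact absurd this (not_le.2 hem.2)
      exact hav (finv e) (Finset.mem_union_right _ (Finset.mem_image.2 ⟨e, he, rfl⟩)) ⟨h1, h2⟩
    obtain ⟨m, hm⟩ := hg.aff_avoid hfaI hfbI hfab havg
    refine ⟨m + k, fun t ht => ?_⟩
    have htI : t ∈ Set.Icc p q := ⟨le_trans haI.1 ht.1, le_trans ht.2 hbI.2⟩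
    have hft : f t ∈ Set.Icc (f a) (f b) :=
      ⟨hf.mono haI htI ht.1, hf.mono htI hbI ht.2⟩
    show g (f t) = g (f a) + (2:ℝ) ^ (m + k) * (t - a)
    rw [hm (f t) hft, hk t ht]
    have he2 : f a + (2:ℝ)^k * (t - a) - f a = (2:ℝ)^k * (t - a) := by ring
    rw [he2, zpow_add₀ (by norm_num : (2:ℝ) ≠ 0)]
    ring

end TLF

lemma TLF_affine (k : ℤ) (c : ℝ) {p q : ℝ} (hp : IsDyadic p) (hq : IsDyadic q)
    (hpq : p < q) :
    TLF p q ((2:ℝ)^k * p + c) ((2:ℝ)^k * q + c) (fun t => (2:ℝ)^k * t + c) {p, q} := by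
  refine ⟨rfl, rfl, hpq, Finset.mem_insert_self _ _,
    Finset.mem_insert.2 (Or.inr (Finset.mem_singleton_self _)), ?_, ?_, ?_⟩
  · intro d hd
    rcases Finset.mem_insert.1 hd with rfl | hd
    · exact hp
    · rw [Finset.mem_singleton.1 hd]; exact hq
  · intro d hd
    rcases Finset.mem_insert.1 hd with rfl | hd
    · exact ⟨le_rfl, le_of_lt hpq⟩
    · rw [Finset.mem_singleton.1 hd]; exact ⟨le_of_lt hpq, le_rfl⟩
  · intro a _ b _ _ _
    exact ⟨k, fun t _ => by ring⟩

lemma TLF.toThompsonLike {p q r s : ℝ} {f : ℝ → ℝ} {D : Finset ℝ}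
    (h : TLF p q r s f D) : ThompsonLike p q r s f := by
  classical
  refine ⟨h.fp, h.fq, ?_⟩
  set l := D.sort (· ≤ ·) with hldef
  have hlen : l.length = D.card := Finset.length_sort _
  have hsorted : l.Pairwise (· < ·) := (Finset.sortedLT_sort D).pairwise
  have hmono : StrictMono l.get := (Finset.sortedLT_sort D).strictMono_get
  have hcard : 2 ≤ D.card := Finset.one_lt_card.2 ⟨p, h.pD, q, h.qD, ne_of_lt h.plq⟩
  have hmemD : ∀ d, d ∈ l ↔ d ∈ D := fun d => Finset.mem_sort (α := ℝ) (· ≤ ·)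
  set n := D.card - 1 with hndef
  set x : ℕ → ℝ := fun i => if hi : i < l.length then l.get ⟨i, hi⟩ else q with hxdef
  have hxval : ∀ i, i ≤ n → ∃ hi : i < l.length, x i = l.get ⟨i, hi⟩ := by
    intro i hi
    have : i < l.length := by rw [hlen]; omega
    exact ⟨this, by simp [hxdef, this]⟩
  have hxD : ∀ i, i ≤ n → x i ∈ D := by
    intro i hi
    obtain ⟨h1, h2⟩ := hxval i hi
    rw [h2, ← hmemD]
    exact List.get_mem l _
  have hx0 : x 0 = p := by
    obtain ⟨h1, h2⟩ := hxval 0 (by omega)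
    obtain ⟨j, hj⟩ := List.mem_iff_get.1 ((hmemD p).2 h.pD)
    have hle : l.get ⟨0, h1⟩ ≤ l.get j := hmono.monotone (by simp [Fin.le_def])
    rw [hj] at hle
    have hge : p ≤ x 0 := (h.subI _ (hxD 0 (by omega))).1
    rw [h2] at hge ⊢
    exact le_antisymm hle hge
  have hxn : x n = q := by
    obtain ⟨h1, h2⟩ := hxval n le_rfl
    obtain ⟨j, hj⟩ := List.mem_iff_get.1 ((hmemD q).2 h.qD)
    have hjn : (j : ℕ) ≤ n := by
      have h3 := j.isLt
      omega
    have hle : l.get j ≤ l.get ⟨n, h1⟩ := hmono.monotone (by simp [Fin.le_def]; omega)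
    rw [hj] at hle
    have hge : x n ≤ q := (h.subI _ (hxD n le_rfl)).2
    rw [h2] at hge ⊢
    exact le_antisymm hge hle
  have hxlt : ∀ i, i < n → x i < x (i+1) := by
    intro i hi
    obtain ⟨h1, e1⟩ := hxval i (by omega)
    obtain ⟨h2, e2⟩ := hxval (i+1) (by omega)
    rw [e1, e2]
    exact hmono (by simp [Fin.lt_def])
  refine ⟨n, by omega, x, hx0, hxn, hxlt, fun i hi => h.dy _ (hxD i hi), ?_⟩
  intro i hi
  have hiD := hxD i (by omega)
  have hi1D := hxD (i+1) (by omega)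
  refine h.aff _ hiD _ hi1D (hxlt i hi) ?_
  intro d hd hdm
  obtain ⟨j, hj⟩ := List.mem_iff_get.1 ((hmemD d).2 hd)
  obtain ⟨g1, e1⟩ := hxval i (by omega)
  obtain ⟨g2, e2⟩ := hxval (i+1) (by omega)
  have hij : (⟨i, g1⟩ : Fin l.length) < j := by
    rw [← hmono.lt_iff_lt, hj, ← e1]
    exact hdm.1
  have hji : j < (⟨i+1, g2⟩ : Fin l.length) := by
    rw [← hmono.lt_iff_lt, hj, ← e2]
    exact hdm.2
  simp only [Fin.lt_def] at hij hji
  omega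

lemma TLF.ofThompsonLike {p q r s : ℝ} {f : ℝ → ℝ}
    (h : ThompsonLike p q r s f) : ∃ D : Finset ℝ, TLF p q r s f D := by
  classical
  obtain ⟨hp, hq, n, hn, x, hx0, hxn, hlt, hdy, hpc⟩ := h
  have hmono0 : ∀ j i, i < j → j ≤ n → x i < x j := by
    intro j
    induction j with
    | zero => intro i h1 _; omega
    | succ j ih =>
      intro i hij hjn
      rcases Nat.lt_or_ge i j with h1 | h1
      · exact lt_trans (ih i h1 (by omega)) (hlt j (by omega))
      · have h2 : i = j := by omega
        subst h2
        exact hlt i (by omega)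
  have hmono : ∀ i j, i < j → j ≤ n → x i < x j := fun i j a b => hmono0 j i a b
  have hmole : ∀ i j, i ≤ j → j ≤ n → x i ≤ x j := by
    intro i j hij hjn
    rcases Nat.lt_or_ge i j with h1 | h1
    · exact le_of_lt (hmono i j h1 hjn)
    · have : i = j := by omega
      rw [this]
  refine ⟨(Finset.range (n+1)).image x, hp, hq, ?_, ?_, ?_, ?_, ?_, ?_⟩
  · rw [← hx0, ← hxn]
    exact hmono 0 n hn le_rfl
  · rw [← hx0]
    exact Finset.mem_image.2 ⟨0, Finset.mem_range.2 (by omega), rfl⟩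
  · rw [← hxn]
    exact Finset.mem_image.2 ⟨n, Finset.mem_range.2 (by omega), rfl⟩
  · intro d hd
    obtain ⟨i, hi, rfl⟩ := Finset.mem_image.1 hd
    have := Finset.mem_range.1 hi
    exact hdy i (by omega)
  · intro d hd
    obtain ⟨i, hi, rfl⟩ := Finset.mem_image.1 hd
    have hi' : i ≤ n := by
      have := Finset.mem_range.1 hi
      omega
    exact ⟨hx0 ▸ hmole 0 i (by omega) hi', hxn ▸ hmole i n hi' le_rfl⟩
  · intro a ha b hb hab hav
    obtain ⟨i, hi, rfl⟩ := Finset.mem_image.1 ha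
    obtain ⟨j, hj, rfl⟩ := Finset.mem_image.1 hb
    have hi' : i ≤ n := by have := Finset.mem_range.1 hi; omega
    have hj' : j ≤ n := by have := Finset.mem_range.1 hj; omega
    have hij : i < j := by
      by_contra hcon
      push_neg at hcon
      exact absurd (hmole j i hcon hi') (not_le.2 hab)
    have hj1 : j = i + 1 := by
      by_contra hcon
      have hi1j : i + 1 < j := by omega
      refine hav (x (i+1)) (Finset.mem_image.2 ⟨i+1, Finset.mem_range.2 (by omega), rfl⟩) ?_
      exact ⟨hmono i (i+1) (by omega) (by omega), hmono (i+1) j hi1j hj'⟩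
    subst hj1
    exact hpc i (by omega)

lemma TLF_id {p q : ℝ} (hp : IsDyadic p) (hq : IsDyadic q) (hpq : p < q) :
    TLF p q p q (fun t => t) {p, q} := by
  refine ⟨rfl, rfl, hpq, Finset.mem_insert_self _ _,
    Finset.mem_insert.2 (Or.inr (Finset.mem_singleton_self _)), ?_, ?_, ?_⟩
  · intro d hd
    rcases Finset.mem_insert.1 hd with rfl | hd
    · exact hp
    · rw [Finset.mem_singleton.1 hd]; exact hq
  · intro d hd
    rcases Finset.mem_insert.1 hd with rfl | hd
    · exact ⟨le_rfl, le_of_lt hpq⟩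
    · rw [Finset.mem_singleton.1 hd]; exact ⟨le_of_lt hpq, le_rfl⟩
  · intro a _ b _ _ _
    exact ⟨0, fun t _ => by rw [zpow_zero]; ring⟩

lemma TLF.cast {p q r s r' s' : ℝ} {f : ℝ → ℝ} {D : Finset ℝ}
    (h : TLF p q r s f D) (hr : r = r') (hs : s = s') : TLF p q r' s' f D :=
  hr ▸ hs ▸ h

lemma InF_one {p q : ℝ} (hp : IsDyadic p) (hq : IsDyadic q) (hpq : p < q) :
    InF p q 1 := by
  refine ⟨((TLF_id hp hq hpq).congr (fun t _ => rfl)).toThompsonLike, fun x _ => rfl⟩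

lemma InF.mul_s5 {p q : ℝ} {g h : Equiv.Perm ℝ} (hg : InF p q g) (hh : InF p q h) :
    InF p q (g * h) := by
  obtain ⟨Dg, hDg⟩ := TLF.ofThompsonLike hg.1
  obtain ⟨Dh, hDh⟩ := TLF.ofThompsonLike hh.1
  have hpd : IsDyadic p := hDg.dy p hDg.pD
  obtain ⟨E, hE⟩ := hDh.comp hDg hpd
  refine ⟨(hE.congr (fun t _ => rfl)).toThompsonLike, fun x hx => ?_⟩
  have h1 : h x = x := hh.2 x hx
  have h2 : g x = x := hg.2 x hx
  show g (h x) = x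
  rw [h1, h2]

lemma InF.inv_s5 {p q : ℝ} {g : Equiv.Perm ℝ} (hg : InF p q g) : InF p q g⁻¹ := by
  obtain ⟨D, hD⟩ := TLF.ofThompsonLike hg.1
  have hpd : IsDyadic p := hD.dy p hD.pD
  have hTLF : TLF p q p q (⇑g⁻¹) (D.image ⇑g) := by
    refine ⟨?_, ?_, hD.plq, ?_, ?_, ?_, ?_, ?_⟩
    · show g⁻¹ p = p
      conv_lhs => rw [← hD.fp]
      exact g.symm_apply_apply p
    · show g⁻¹ q = q
      conv_lhs => rw [← hD.fq]
      exact g.symm_apply_apply q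
    · exact Finset.mem_image.2 ⟨p, hD.pD, hD.fp⟩
    · exact Finset.mem_image.2 ⟨q, hD.qD, hD.fq⟩
    · intro d hd
      obtain ⟨e, he, rfl⟩ := Finset.mem_image.1 hd
      exact hD.dyadic_val_mem hpd e he
    · intro d hd
      obtain ⟨e, he, rfl⟩ := Finset.mem_image.1 hd
      exact hD.maps_to (hD.subI e he)
    · intro a' ha' b' hb' hab' hav'
      obtain ⟨a, haD, rfl⟩ := Finset.mem_image.1 ha'
      obtain ⟨b, hbD, rfl⟩ := Finset.mem_image.1 hb'
      have haI := hD.subI a haD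
      have hbI := hD.subI b hbD
      have hab : a < b := by
        by_contra hcon
        push_neg at hcon
        exact absurd (hD.mono hbI haI hcon) (not_le.2 hab')
      have hav : ∀ d ∈ D, d ∉ Set.Ioo a b := by
        intro d hd hdm
        refine hav' (g d) (Finset.mem_image.2 ⟨d, hd, rfl⟩) ?_
        exact ⟨hD.smono haI (hD.subI d hd) hdm.1, hD.smono (hD.subI d hd) hbI hdm.2⟩
      obtain ⟨k, hk⟩ := hD.aff a haD b hbD hab hav
      refine ⟨-k, fun u hu => ?_⟩
      have hga : (⇑g⁻¹) (g a) = a := g.symm_apply_apply a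
      rw [hga]
      have hk2 : (2:ℝ)^k * (2:ℝ)^(-k) = 1 := by
        rw [← zpow_add₀ (by norm_num : (2:ℝ) ≠ 0)]; simp
      have hkpos : (0:ℝ) < (2:ℝ)^(-k) := zpow_pos (by norm_num) _
      have hfb := hk b ⟨le_of_lt hab, le_rfl⟩
      set t := a + (2:ℝ)^(-k) * (u - g a) with ht
      have htI : t ∈ Set.Icc a b := by
        constructor
        · have : (0:ℝ) ≤ (2:ℝ)^(-k) * (u - g a) := by nlinarith [hu.1]
          rw [ht]; linarith
        · have h5 : (2:ℝ)^(-k) * (u - g a) ≤ (2:ℝ)^(-k) * (g b - g a) := by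
            nlinarith [hu.2]
          have h6 : (2:ℝ)^(-k) * (g b - g a) = b - a := by
            rw [hfb]
            have e : (⇑g) a + (2:ℝ)^k*(b-a) - (⇑g) a = (2:ℝ)^k*(b-a) := by ring
            rw [e, ← mul_assoc, mul_comm ((2:ℝ)^(-k)), hk2, one_mul]
          rw [ht]; linarith
      have hgt : g t = u := by
        rw [hk t htI]
        have e : t - a = (2:ℝ)^(-k) * (u - g a) := by rw [ht]; ring
        rw [e, ← mul_assoc, hk2, one_mul]
        ring
      show (⇑g⁻¹) u = t
      rw [← hgt]
      exact g.symm_apply_apply t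
  refine ⟨(hTLF.congr (fun t _ => rfl)).toThompsonLike, fun x hx => ?_⟩
  have h1 : g x = x := hg.2 x hx
  show g⁻¹ x = x
  conv_lhs => rw [← h1]
  exact g.symm_apply_apply x

lemma InF.mono {p q p' q' : ℝ} {g : Equiv.Perm ℝ} (h : InF p q g)
    (hp' : IsDyadic p') (hq' : IsDyadic q') (hpp : p' ≤ p) (hqq : q ≤ q') :
    InF p' q' g := by
  obtain ⟨D, hD⟩ := TLF.ofThompsonLike h.1
  have hpd : IsDyadic p := hD.dy p hD.pD
  have hqd : IsDyadic q := hD.dy q hD.qD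
  -- extend left
  have hleft : ∃ D1, TLF p' q p' q (⇑g) D1 := by
    rcases eq_or_lt_of_le hpp with rfl | hlt
    · exact ⟨D, hD⟩
    · have hid : TLF p' p p' p (fun t => t) {p', p} := TLF_id hp' hpd hlt
      have hgl := hid.glue hD
      refine ⟨_, hgl.congr (fun t _ => ?_)⟩
      by_cases htp : t ≤ p
      · rw [if_pos htp]
        rcases eq_or_lt_of_le htp with rfl | hlt2
        · exact hD.fp.symm
        · exact (h.2 t (fun hc => absurd hc.1 (not_le.2 hlt2))).symm
      · rw [if_neg htp]
  obtain ⟨D1, hD1⟩ := hleft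
  have hright : ∃ D2, TLF p' q' p' q' (⇑g) D2 := by
    rcases eq_or_lt_of_le hqq with rfl | hlt
    · exact ⟨D1, hD1⟩
    · have hid : TLF q q' q q' (fun t => t) {q, q'} := TLF_id hqd hq' hlt
      have hgl := hD1.glue hid
      refine ⟨_, hgl.congr (fun t _ => ?_)⟩
      by_cases htq : t ≤ q
      · rw [if_pos htq]
      · rw [if_neg htq]
        exact (h.2 t (fun hc => absurd hc.2 (not_le.2 (not_le.1 htq)))).symm
  obtain ⟨D2, hD2⟩ := hright
  refine ⟨hD2.toThompsonLike, fun x hx => ?_⟩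
  refine h.2 x (fun hc => hx ⟨le_trans hpp hc.1, le_trans hc.2 hqq⟩)

lemma InF.fix_left {p q a : ℝ} {g : Equiv.Perm ℝ} (h : InF p q g) (ha : IsDyadic a)
    (hpa : p ≤ a) (haq : a < q) (hfix : ∀ t, p ≤ t → t ≤ a → g t = t) :
    InF a q g := by
  obtain ⟨D, hD⟩ := TLF.ofThompsonLike h.1
  have hqd : IsDyadic q := hD.dy q hD.qD
  have hres := hD.restrict (c := a) (d := q) ⟨hpa, le_of_lt haq⟩
    ⟨le_of_lt (lt_of_le_of_lt hpa haq), le_rfl⟩ haq ha hqd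
  have hga : (⇑g) a = a := hfix a hpa le_rfl
  have hgq : (⇑g) q = q := hD.fq
  rw [hga, hgq] at hres
  refine ⟨hres.toThompsonLike, fun x hx => ?_⟩
  rcases lt_or_ge x a with h1 | h1
  · rcases lt_or_ge x p with h2 | h2
    · exact h.2 x (fun hc => absurd hc.1 (not_le.2 h2))
    · exact hfix x h2 (le_of_lt h1)
  · have : q < x := by
      rcases lt_or_ge q x with h3 | h3
      · exact h3
      · exact absurd ⟨h1, h3⟩ hx
    exact h.2 x (fun hc => absurd hc.2 (not_le.2 this))

lemma InF_of_fun {p q : ℝ} {f : ℝ → ℝ} {D : Finset ℝ} (hf : TLF p q p q f D)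
    (hid : ∀ x, x ∉ Set.Icc p q → f x = x) :
    ∃ g : Equiv.Perm ℝ, InF p q g ∧ ∀ x, g x = f x := by
  have hfmaps : ∀ t, t ∈ Set.Icc p q → f t ∈ Set.Icc p q := fun t ht => hf.maps_to ht
  have hsm : StrictMono f := by
    intro a b hab
    rcases lt_or_ge b p with h1 | h1
    · rw [hid a (fun hc => absurd hc.1 (not_le.2 (lt_trans hab h1))),
        hid b (fun hc => absurd hc.1 (not_le.2 h1))]
      exact hab
    rcases le_or_gt b q with h2 | h2
    · rcases lt_or_ge a p with h3 | h3
      · rw [hid a (fun hc => absurd hc.1 (not_le.2 h3))]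
        have : p ≤ f b := (hfmaps b ⟨h1, h2⟩).1
        linarith
      · exact hf.smono ⟨h3, le_of_lt (lt_of_lt_of_le hab h2)⟩ ⟨h1, h2⟩ hab
    · rw [hid b (fun hc => absurd hc.2 (not_le.2 h2))]
      rcases le_or_gt a q with h3 | h3
      · rcases lt_or_ge a p with h4 | h4
        · rw [hid a (fun hc => absurd hc.1 (not_le.2 h4))]
          exact hab
        · have : f a ≤ q := (hfmaps a ⟨h4, h3⟩).2
          linarith
      · rw [hid a (fun hc => absurd hc.2 (not_le.2 h3))]
        exact hab
  have hsur : Function.Surjective f := by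
    intro y
    by_cases hy : y ∈ Set.Icc p q
    · obtain ⟨t, ht, htv⟩ := hf.surjOn hy
      exact ⟨t, htv⟩
    · exact ⟨y, hid y hy⟩
  refine ⟨Equiv.ofBijective f ⟨hsm.injective, hsur⟩, ⟨?_, ?_⟩, fun x => rfl⟩
  · exact (hf.congr (fun t _ => rfl)).toThompsonLike
  · intro x hx
    exact hid x hx

lemma dyadic_half : IsDyadic ((1:ℝ)/2) := ⟨1, 1, by norm_num⟩

lemma dyadic_invpow (n : ℕ) : IsDyadic ((1:ℝ)/2^n) := ⟨1, n, by norm_num⟩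

/-- Thompson maps `[0,1] → [0,M]` exist for every positive dyadic `M`. -/
lemma good1 : ∀ M : ℝ, IsDyadic M → 0 < M → ∃ f : ℝ → ℝ, ∃ D : Finset ℝ, TLF 0 1 0 M f D := by
  classical
  have h0 : IsDyadic 0 := IsDyadic.zero
  have h1 : IsDyadic 1 := IsDyadic.one
  have hscale : ∀ (k : ℤ) (M : ℝ), IsDyadic M → 0 < M →
      (∃ f D, TLF 0 1 0 M f D) → ∃ f D, TLF 0 1 0 ((2:ℝ)^k * M) f D := by
    intro k M hM hMpos ⟨f, D, hf⟩
    have haff := (TLF_affine k 0 h0 hM hMpos).cast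
      (show (2:ℝ)^k * 0 + 0 = 0 by ring) (show (2:ℝ)^k * M + 0 = (2:ℝ)^k * M by ring)
    obtain ⟨E, hE⟩ := hf.comp haff IsDyadic.zero
    exact ⟨_, E, hE⟩
  have hadd : ∀ M M' : ℝ, IsDyadic M → IsDyadic M' → 0 < M → 0 < M' →
      (∃ f D, TLF 0 1 0 M f D) → (∃ f D, TLF 0 1 0 M' f D) →
      ∃ f D, TLF 0 1 0 (M + M') f D := by
    intro M M' hM hM' hMpos hM'pos ⟨f1, D1, hf1⟩ ⟨f2, D2, hf2⟩
    have la := (TLF_affine 1 0 h0 dyadic_half (by norm_num)).cast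
      (show (2:ℝ)^(1:ℤ) * 0 + 0 = 0 by ring)
      (show (2:ℝ)^(1:ℤ) * (1/2) + 0 = 1 by rw [zpow_one]; norm_num)
    obtain ⟨E1, hE1⟩ := la.comp hf1 IsDyadic.zero
    have ra := (TLF_affine 1 (-1) dyadic_half h1 (by norm_num)).cast
      (show (2:ℝ)^(1:ℤ) * (1/2) + -1 = 0 by rw [zpow_one]; norm_num)
      (show (2:ℝ)^(1:ℤ) * 1 + -1 = 1 by rw [zpow_one]; norm_num)
    obtain ⟨E2, hE2⟩ := ra.comp hf2 IsDyadic.zero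
    have sh := (TLF_affine 0 M h0 hM' hM'pos).cast
      (show (2:ℝ)^(0:ℤ) * 0 + M = M by rw [zpow_zero]; ring)
      (show (2:ℝ)^(0:ℤ) * M' + M = M + M' by rw [zpow_zero]; ring)
    obtain ⟨E3, hE3⟩ := hE2.comp sh IsDyadic.zero
    exact ⟨_, _, hE1.glue hE3⟩
  have hbase : ∀ n : ℕ, ∃ f D, TLF 0 1 0 ((1:ℝ)/2^n) f D := by
    intro n
    induction n with
    | zero =>
      have e : (1:ℝ)/2^(0:ℕ) = 1 := by norm_num
      rw [e]
      exact ⟨_, _, TLF_id h0 h1 (by norm_num)⟩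
    | succ n ih =>
      obtain ⟨f, D, hf⟩ := hscale (-1) ((1:ℝ)/2^n) (dyadic_invpow n) (by positivity) ih
      have e : (2:ℝ)^(-1:ℤ) * ((1:ℝ)/2^n) = (1:ℝ)/2^(n+1) := by
        rw [zpow_neg_one, pow_succ]
        field_simp
      rw [e] at hf
      exact ⟨f, D, hf⟩
  have hnat : ∀ a : ℕ, 0 < a → ∀ n : ℕ, ∃ f D, TLF 0 1 0 ((a:ℝ)/2^n) f D := by
    intro a
    induction a with
    | zero => omega
    | succ a ih =>
      intro _ n
      rcases Nat.eq_zero_or_pos a with rfl | hpos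
      · obtain ⟨f, D, hf⟩ := hbase n
        have e : ((0+1:ℕ):ℝ)/2^n = (1:ℝ)/2^n := by norm_num
        rw [e]
        exact ⟨f, D, hf⟩
      · obtain ⟨f, D, hf⟩ := hadd ((a:ℝ)/2^n) ((1:ℝ)/2^n) ⟨a, n, by push_cast; ring⟩
          (dyadic_invpow n) (by positivity) (by positivity) (ih hpos n) (hbase n)
        have e : (a:ℝ)/2^n + (1:ℝ)/2^n = ((a+1:ℕ):ℝ)/2^n := by push_cast; ring
        rw [e] at hf
        exact ⟨f, D, hf⟩
  intro M hM hMpos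
  obtain ⟨z, n, rfl⟩ := hM
  have h2 : (0:ℝ) < 2^n := by positivity
  have hzr : (0:ℝ) < (z:ℝ) := by
    have e : (z:ℝ) = (z:ℝ)/2^n * 2^n := by field_simp
    rw [e]
    exact mul_pos hMpos h2
  have hzpos : 0 < z := by exact_mod_cast hzr
  obtain ⟨f, D, hf⟩ := hnat z.toNat (by omega) n
  have e : ((z.toNat:ℕ):ℝ)/2^n = (z:ℝ)/2^n := by
    congr 1
    exact_mod_cast congrArg (fun m : ℤ => (m:ℝ)) (Int.toNat_of_nonneg (le_of_lt hzpos))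
  rw [e] at hf
  exact ⟨f, D, hf⟩

/-- Thompson maps `[0,L] → [0,1]` exist for every positive dyadic `L`. -/
lemma good2 : ∀ L : ℝ, IsDyadic L → 0 < L → ∃ f : ℝ → ℝ, ∃ D : Finset ℝ, TLF 0 L 0 1 f D := by
  classical
  have h0 : IsDyadic 0 := IsDyadic.zero
  have h1 : IsDyadic 1 := IsDyadic.one
  obtain ⟨fh, Dh, hhalf⟩ := good1 ((1:ℝ)/2) dyadic_half (by norm_num)
  have hscale : ∀ (k : ℤ) (L : ℝ), IsDyadic L → 0 < L →
      (∃ f D, TLF 0 L 0 1 f D) → ∃ f D, TLF 0 ((2:ℝ)^k * L) 0 1 f D := by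
    intro k L hL hLpos ⟨f, D, hf⟩
    have haff := (TLF_affine (-k) 0 h0 (hL.zpow_mul k) (by positivity)).cast
      (show (2:ℝ)^(-k) * 0 + 0 = 0 by ring)
      (show (2:ℝ)^(-k) * ((2:ℝ)^k * L) + 0 = L by
        rw [← mul_assoc, ← zpow_add₀ (by norm_num : (2:ℝ) ≠ 0)]
        simp)
    obtain ⟨E, hE⟩ := haff.comp hf IsDyadic.zero
    exact ⟨_, E, hE⟩
  have hadd : ∀ L L' : ℝ, IsDyadic L → IsDyadic L' → 0 < L → 0 < L' →
      (∃ f D, TLF 0 L 0 1 f D) → (∃ f D, TLF 0 L' 0 1 f D) →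
      ∃ f D, TLF 0 (L + L') 0 1 f D := by
    intro L L' hL hL' hLpos hL'pos ⟨f1, D1, hf1⟩ ⟨f2, D2, hf2⟩
    obtain ⟨E1, hE1⟩ := hf1.comp hhalf IsDyadic.zero
    have presh := (TLF_affine 0 (-L) hL (hL.add_s5 hL') (by linarith)).cast
      (show (2:ℝ)^(0:ℤ) * L + -L = 0 by rw [zpow_zero]; ring)
      (show (2:ℝ)^(0:ℤ) * (L + L') + -L = L' by rw [zpow_zero]; ring)
    obtain ⟨E2, hE2⟩ := presh.comp hf2 IsDyadic.zero
    obtain ⟨E3, hE3⟩ := hE2.comp hhalf IsDyadic.zero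
    have postsh := (TLF_affine 0 ((1:ℝ)/2) h0 dyadic_half (by norm_num)).cast
      (show (2:ℝ)^(0:ℤ) * 0 + 1/2 = 1/2 by rw [zpow_zero]; ring)
      (show (2:ℝ)^(0:ℤ) * (1/2) + 1/2 = 1 by rw [zpow_zero]; norm_num)
    obtain ⟨E4, hE4⟩ := hE3.comp postsh IsDyadic.zero
    exact ⟨_, _, hE1.glue hE4⟩
  have hbase : ∀ n : ℕ, ∃ f D, TLF 0 ((1:ℝ)/2^n) 0 1 f D := by
    intro n
    induction n with
    | zero =>
      have e : (1:ℝ)/2^(0:ℕ) = 1 := by norm_num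
      rw [e]
      exact ⟨_, _, TLF_id h0 h1 (by norm_num)⟩
    | succ n ih =>
      obtain ⟨f, D, hf⟩ := hscale (-1) ((1:ℝ)/2^n) (dyadic_invpow n) (by positivity) ih
      have e : (2:ℝ)^(-1:ℤ) * ((1:ℝ)/2^n) = (1:ℝ)/2^(n+1) := by
        rw [zpow_neg_one, pow_succ]
        field_simp
      rw [e] at hf
      exact ⟨f, D, hf⟩
  have hnat : ∀ a : ℕ, 0 < a → ∀ n : ℕ, ∃ f D, TLF 0 ((a:ℝ)/2^n) 0 1 f D := by
    intro a
    induction a with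
    | zero => omega
    | succ a ih =>
      intro _ n
      rcases Nat.eq_zero_or_pos a with rfl | hpos
      · obtain ⟨f, D, hf⟩ := hbase n
        have e : ((0+1:ℕ):ℝ)/2^n = (1:ℝ)/2^n := by norm_num
        rw [e]
        exact ⟨f, D, hf⟩
      · obtain ⟨f, D, hf⟩ := hadd ((a:ℝ)/2^n) ((1:ℝ)/2^n) ⟨a, n, by push_cast; ring⟩
          (dyadic_invpow n) (by positivity) (by positivity) (ih hpos n) (hbase n)
        have e : (a:ℝ)/2^n + (1:ℝ)/2^n = ((a+1:ℕ):ℝ)/2^n := by push_cast; ring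
        rw [e] at hf
        exact ⟨f, D, hf⟩
  intro L hL hLpos
  obtain ⟨z, n, rfl⟩ := hL
  have h2 : (0:ℝ) < 2^n := by positivity
  have hzr : (0:ℝ) < (z:ℝ) := by
    have e : (z:ℝ) = (z:ℝ)/2^n * 2^n := by field_simp
    rw [e]
    exact mul_pos hLpos h2
  have hzpos : 0 < z := by exact_mod_cast hzr
  obtain ⟨f, D, hf⟩ := hnat z.toNat (by omega) n
  have e : ((z.toNat:ℕ):ℝ)/2^n = (z:ℝ)/2^n := by
    congr 1
    exact_mod_cast congrArg (fun m : ℤ => (m:ℝ)) (Int.toNat_of_nonneg (le_of_lt hzpos))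
  rw [e] at hf
  exact ⟨f, D, hf⟩

/-- Thompson maps between arbitrary dyadic intervals exist. -/
lemma exists_TLF {p q p' q' : ℝ} (hp : IsDyadic p) (hq : IsDyadic q) (hpq : p < q)
    (hp' : IsDyadic p') (hq' : IsDyadic q') (hpq' : p' < q') :
    ∃ f : ℝ → ℝ, ∃ D : Finset ℝ, TLF p q p' q' f D := by
  obtain ⟨f1, D1, h1⟩ := good2 (q - p) (hq.sub_s5 hp) (by linarith)
  obtain ⟨f2, D2, h2⟩ := good1 (q' - p') (hq'.sub_s5 hp') (by linarith)
  have pre := (TLF_affine 0 (-p) hp hq hpq).cast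
    (show (2:ℝ)^(0:ℤ) * p + -p = 0 by rw [zpow_zero]; ring)
    (show (2:ℝ)^(0:ℤ) * q + -p = q - p by rw [zpow_zero]; ring)
  obtain ⟨E1, c1⟩ := pre.comp h1 IsDyadic.zero
  obtain ⟨E2, c2⟩ := c1.comp h2 IsDyadic.zero
  have post := (TLF_affine 0 p' IsDyadic.zero (hq'.sub_s5 hp') (by linarith)).cast
    (show (2:ℝ)^(0:ℤ) * 0 + p' = p' by rw [zpow_zero]; ring)
    (show (2:ℝ)^(0:ℤ) * (q' - p') + p' = q' by rw [zpow_zero]; ring)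
  obtain ⟨E3, c3⟩ := c2.comp post IsDyadic.zero
  exact ⟨_, E3, c3⟩

/-- Glue a Thompson map on `[R,a]` with one on `[a,S]` into an element of `F_{[R,S]}`. -/
lemma exists_InF_glue {R S a v : ℝ} {f1 f2 : ℝ → ℝ} {D1 D2 : Finset ℝ}
    (h1 : TLF R a R v f1 D1) (h2 : TLF a S v S f2 D2) :
    ∃ h : Equiv.Perm ℝ, InF R S h ∧ ∀ t, R ≤ t → t ≤ a → h t = f1 t := by
  have hgl := h1.glue h2
  have hRS : R < S := lt_trans h1.plq h2.plq
  set F : ℝ → ℝ := fun t => if t < R ∨ S < t then t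
    else (if t ≤ a then f1 t else f2 t) with hF
  have hne : ∀ t, t ∈ Set.Icc R S → ¬(t < R ∨ S < t) := by
    intro t ht hc
    rcases hc with hc | hc
    · exact absurd ht.1 (not_le.2 hc)
    · exact absurd ht.2 (not_le.2 hc)
  have hTLF : TLF R S R S F (D1 ∪ D2) := by
    refine hgl.congr (fun t ht => ?_)
    rw [hF]
    simp only
    rw [if_neg (hne t ht)]
  have hid : ∀ x, x ∉ Set.Icc R S → F x = x := by
    intro x hx
    have hxor : x < R ∨ S < x := by
      by_contra hc
      push_neg at hc
      exact hx ⟨hc.1, hc.2⟩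
    rw [hF]
    simp only
    rw [if_pos hxor]
  obtain ⟨g, hg, hgeq⟩ := InF_of_fun hTLF hid
  refine ⟨g, hg, fun t htR hta => ?_⟩
  rw [hgeq, hF]
  simp only
  rw [if_neg (hne t ⟨htR, le_trans hta (le_of_lt h2.plq)⟩), if_pos hta]

/-- An element of `F_{[R,S]}` moving a prescribed interior dyadic point to another. -/
lemma exists_InF_map {R S a b : ℝ} (hR : IsDyadic R) (hS : IsDyadic S)
    (ha : IsDyadic a) (hb : IsDyadic b) (hRa : R < a) (haS : a < S)
    (hRb : R < b) (hbS : b < S) :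
    ∃ h : Equiv.Perm ℝ, InF R S h ∧ h a = b := by
  obtain ⟨f1, D1, h1⟩ := exists_TLF hR ha hRa hR hb hRb
  obtain ⟨f2, D2, h2⟩ := exists_TLF ha hS haS hb hS hbS
  obtain ⟨h, hh, heq⟩ := exists_InF_glue h1 h2
  refine ⟨h, hh, ?_⟩
  rw [heq a (le_of_lt hRa) le_rfl]
  exact h1.fq

lemma caseA {R S r2 s1 : ℝ} (hR : IsDyadic R) (hS : IsDyadic S) (hr2 : IsDyadic r2)
    (hs1 : IsDyadic s1) (hRr2 : R ≤ r2) (hr2s1 : r2 < s1) (hs1S : s1 ≤ S)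
    {g : Equiv.Perm ℝ} (hg : InF R S g) (hA : g r2 < s1) :
    g ∈ Subgroup.closure ({g : Equiv.Perm ℝ | InF R s1 g} ∪ {g | InF r2 S g}) := by
  classical
  have hr2S : r2 < S := lt_of_lt_of_le hr2s1 hs1S
  have hRS : R < S := lt_of_le_of_lt hRr2 hr2S
  have hRs1 : R < s1 := lt_of_le_of_lt hRr2 hr2s1
  obtain ⟨D, hD⟩ := TLF.ofThompsonLike hg.1
  have hr2I : r2 ∈ Set.Icc R S := ⟨hRr2, le_of_lt hr2S⟩
  -- next breakpoint after r2
  have hSf : S ∈ D.filter (fun d => r2 < d) := Finset.mem_filter.2 ⟨hD.qD, hr2S⟩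
  obtain ⟨B, hBmem, hBmin⟩ : ∃ B ∈ D.filter (fun d => r2 < d),
      ∀ e ∈ D.filter (fun d => r2 < d), B ≤ e :=
    ⟨_, Finset.min'_mem _ ⟨S, hSf⟩, fun e he => Finset.min'_le _ e he⟩
  have hBD : B ∈ D := (Finset.mem_filter.1 hBmem).1
  have hr2B : r2 < B := (Finset.mem_filter.1 hBmem).2
  have hav : ∀ d ∈ D, d ∉ Set.Ioo r2 B := by
    intro d hd hdm
    exact absurd (hBmin d (Finset.mem_filter.2 ⟨hd, hdm.1⟩)) (not_le.2 hdm.2)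
  obtain ⟨k, hk⟩ := hD.aff_avoid hr2I (hD.subI B hBD) hr2B hav
  have hkpos : (0:ℝ) < (2:ℝ)^k := zpow_pos (by norm_num) _
  have hknpos : (0:ℝ) < (2:ℝ)^(-k) := zpow_pos (by norm_num) _
  have hk2 : (2:ℝ)^k * (2:ℝ)^(-k) = 1 := by
    rw [← zpow_add₀ (by norm_num : (2:ℝ) ≠ 0)]; simp
  set c := min B (min s1 (r2 + (2:ℝ)^(-k) * (s1 - g r2))) with hc
  have hr2c : r2 < c := by
    refine lt_min hr2B (lt_min hr2s1 ?_)
    nlinarith [hA]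
  obtain ⟨a, haDy, har2, hac⟩ := IsDyadic.dense hr2c
  have haB : a < B := lt_of_lt_of_le hac (min_le_left _ _)
  have has1 : a < s1 :=
    lt_of_lt_of_le hac (le_trans (min_le_right _ _) (min_le_left _ _))
  have hax : a < r2 + (2:ℝ)^(-k) * (s1 - g r2) :=
    lt_of_lt_of_le hac (le_trans (min_le_right _ _) (min_le_right _ _))
  have hRa : R < a := lt_of_le_of_lt hRr2 har2
  have haS : a < S := lt_of_lt_of_le has1 hs1S
  have haI : a ∈ Set.Icc R S := ⟨le_of_lt hRa, le_of_lt haS⟩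
  have hga_lt : g a < s1 := by
    have := hk a ⟨le_of_lt har2, le_of_lt haB⟩
    nlinarith [this, hax]
  have hga_dy : IsDyadic ((⇑g) a) := hD.dyadic_val (hD.fp ▸ hR) haI haDy
  have hga_R : R < g a := by
    have := hD.smono (Set.left_mem_Icc.2 (le_of_lt hRS)) haI hRa
    rwa [hD.fp] at this
  have hres := hD.restrict (c := R) (d := a) (Set.left_mem_Icc.2 (le_of_lt hRS)) haI hRa hR haDy
  rw [hD.fp] at hres
  obtain ⟨f2, D2, h2⟩ := exists_TLF haDy hs1 has1 hga_dy hs1 hga_lt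
  obtain ⟨h, hh, heq⟩ := exists_InF_glue hres h2
  have hhRS : InF R S h := hh.mono hR hS le_rfl hs1S
  have hg' : InF R S (h⁻¹ * g) := (InF.inv_s5 hhRS).mul_s5 hg
  have hfix : ∀ t, R ≤ t → t ≤ a → (h⁻¹ * g) t = t := by
    intro t h1t h2t
    have : (⇑(h⁻¹ * g)) t = h⁻¹ (g t) := rfl
    rw [this, ← heq t h1t h2t]
    exact h.symm_apply_apply t
  have hg'aS : InF a S (h⁻¹ * g) := hg'.fix_left haDy (le_of_lt hRa) haS hfix
  have hg'r2S : InF r2 S (h⁻¹ * g) := hg'aS.mono hr2 hS (le_of_lt har2) le_rfl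
  have hmemh : h ∈ Subgroup.closure ({g : Equiv.Perm ℝ | InF R s1 g} ∪ {g | InF r2 S g}) :=
    Subgroup.subset_closure (Or.inl hh)
  have hmemg' : h⁻¹ * g ∈ Subgroup.closure ({g : Equiv.Perm ℝ | InF R s1 g} ∪ {g | InF r2 S g}) :=
    Subgroup.subset_closure (Or.inr hg'r2S)
  have hfin : g = h * (h⁻¹ * g) := by group
  rw [hfin]
  exact mul_mem hmemh hmemg'

lemma two_interval {R S r2 s1 : ℝ} (hR : IsDyadic R) (hS : IsDyadic S)
    (hr2 : IsDyadic r2) (hs1 : IsDyadic s1)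
    (hRr2 : R ≤ r2) (hr2s1 : r2 < s1) (hs1S : s1 ≤ S) :
    {g : Equiv.Perm ℝ | InF R S g} ⊆
      ↑(Subgroup.closure ({g : Equiv.Perm ℝ | InF R s1 g} ∪ {g | InF r2 S g})) := by
  classical
  intro g hg
  have hr2S : r2 < S := lt_of_lt_of_le hr2s1 hs1S
  have hRS : R < S := lt_of_le_of_lt hRr2 hr2S
  rcases lt_or_ge (g r2) s1 with hA | hB
  · exact caseA hR hS hr2 hs1 hRr2 hr2s1 hs1S hg hA
  · obtain ⟨D, hD⟩ := TLF.ofThompsonLike hg.1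
    obtain ⟨a, haDy, har2, has1⟩ := IsDyadic.dense hr2s1
    have hRa : R < a := lt_of_le_of_lt hRr2 har2
    have haS : a < S := lt_of_lt_of_le has1 hs1S
    have haI : a ∈ Set.Icc R S := ⟨le_of_lt hRa, le_of_lt haS⟩
    have hr2I : r2 ∈ Set.Icc R S := ⟨hRr2, le_of_lt hr2S⟩
    have hb_dy : IsDyadic ((⇑g) a) := hD.dyadic_val (hD.fp ▸ hR) haI haDy
    have hab : (⇑g) r2 < (⇑g) a := hD.smono hr2I haI har2
    have hr2b : r2 < (⇑g) a := lt_of_lt_of_le hr2s1 (le_trans hB (le_of_lt hab))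
    have hbS : (⇑g) a < S := by
      have := hD.smono haI (Set.right_mem_Icc.2 (le_of_lt hRS)) haS
      rwa [hD.fq] at this
    obtain ⟨h, hh, hhab⟩ := exists_InF_map hr2 hS haDy hb_dy har2 haS hr2b hbS
    have hhRS : InF R S h := hh.mono hR hS hRr2 le_rfl
    have hg' : InF R S (h⁻¹ * g) := (InF.inv_s5 hhRS).mul_s5 hg
    have hg'a : (⇑(h⁻¹ * g)) a = a := by
      have e1 : (⇑(h⁻¹ * g)) a = h⁻¹ (g a) := rfl
      rw [e1, ← hhab]
      exact h.symm_apply_apply a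
    have hg'r2 : (⇑(h⁻¹ * g)) r2 < s1 := by
      obtain ⟨D', hD'⟩ := TLF.ofThompsonLike hg'.1
      have := hD'.smono hr2I haI har2
      rw [hg'a] at this
      exact lt_trans this has1
    have hmem' := caseA hR hS hr2 hs1 hRr2 hr2s1 hs1S hg' hg'r2
    have hmemh : h ∈ Subgroup.closure ({g : Equiv.Perm ℝ | InF R s1 g} ∪ {g | InF r2 S g}) :=
      Subgroup.subset_closure (Or.inr hh)
    have hfin : g = h * (h⁻¹ * g) := by group
    rw [Set.mem_setOf_eq] at *
    show g ∈ Subgroup.closure ({g : Equiv.Perm ℝ | InF R s1 g} ∪ {g | InF r2 S g})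
    rw [hfin]
    exact mul_mem hmemh hmem'

lemma cover_induction : ∀ N : ℕ, ∀ l : List (ℝ × ℝ), l.length ≤ N → l ≠ [] →
    (∀ pq ∈ l, IsDyadic pq.1 ∧ IsDyadic pq.2 ∧ pq.1 < pq.2) →
    ∀ R S : ℝ, IsDyadic R → IsDyadic S → R < S →
    (⋃ pq ∈ l, Set.Ioo pq.1 pq.2) = Set.Ioo R S →
    {g : Equiv.Perm ℝ | InF R S g} ⊆
      ↑(Subgroup.closure (⋃ pq ∈ l, {g : Equiv.Perm ℝ | InF pq.1 pq.2 g})) := by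
  classical
  intro N
  induction N with
  | zero =>
    intro l hlen hne
    exact absurd (List.length_eq_zero_iff.1 (by omega)) hne
  | succ N ih =>
    intro l hlen hne hdy R S hR hS hRS hcover
    have hbounds : ∀ pq ∈ l, R ≤ pq.1 ∧ pq.2 ≤ S := by
      intro pq hpq
      have hsub : Set.Ioo pq.1 pq.2 ⊆ Set.Ioo R S := by
        rw [← hcover]
        intro t ht
        simp only [Set.mem_iUnion]
        exact ⟨pq, hpq, ht⟩
      exact (Set.Ioo_subset_Ioo_iff (hdy pq hpq).2.2).1 hsub
    obtain ⟨pq0, hpq0l, hpq0R⟩ : ∃ pq ∈ l, pq.1 = R := by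
      by_contra hcon
      push_neg at hcon
      have hne' : (l.toFinset.image Prod.fst).Nonempty := by
        obtain ⟨x, hx⟩ := List.exists_mem_of_ne_nil l hne
        exact ⟨x.1, Finset.mem_image.2 ⟨x, List.mem_toFinset.2 hx, rfl⟩⟩
      obtain ⟨pqm, hpqmf, hpqm_eq⟩ :=
        Finset.mem_image.1 ((l.toFinset.image Prod.fst).min'_mem hne')
      have hpqml : pqm ∈ l := List.mem_toFinset.1 hpqmf
      have hpqmmin : ∀ pq ∈ l, pqm.1 ≤ pq.1 := by
        intro pq hpq
        rw [hpqm_eq]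
        exact Finset.min'_le _ _ (Finset.mem_image.2 ⟨pq, List.mem_toFinset.2 hpq, rfl⟩)
      have hRm : R < pqm.1 :=
        lt_of_le_of_ne (hbounds pqm hpqml).1 (Ne.symm (hcon pqm hpqml))
      set u := min pqm.1 S with hu
      have hRu : R < u := lt_min hRm hRS
      have hu2 : (R + u)/2 < S := by
        have h1 : (R + u)/2 < u := by linarith
        have h2 : u ≤ S := min_le_right _ _
        linarith
      have htmem : (R + u)/2 ∈ Set.Ioo R S := ⟨by linarith, hu2⟩
      rw [← hcover] at htmem
      simp only [Set.mem_iUnion] at htmem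
      obtain ⟨pq, hpql, ht1, ht2⟩ := htmem
      have h2 : pqm.1 ≤ pq.1 := hpqmmin pq hpql
      have h3 : u ≤ pqm.1 := min_le_left _ _
      linarith
    rcases eq_or_lt_of_le (hbounds pq0 hpq0l).2 with hs0S | hs0S
    · intro g hg
      refine Subgroup.subset_closure ?_
      simp only [Set.mem_iUnion]
      refine ⟨pq0, hpq0l, ?_⟩
      rw [Set.mem_setOf_eq, hpq0R, hs0S]
      exact hg
    · have hRs0 : R < pq0.2 := by
        rw [← hpq0R]
        exact (hdy pq0 hpq0l).2.2
      have hs0mem : pq0.2 ∈ Set.Ioo R S := ⟨hRs0, hs0S⟩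
      rw [← hcover] at hs0mem
      simp only [Set.mem_iUnion] at hs0mem
      obtain ⟨pq1, hpq1l, hs0a, hs0b⟩ := hs0mem
      have hne01 : pq1 ≠ pq0 := by
        intro hEq
        rw [hEq] at hs0b
        exact lt_irrefl _ hs0b
      have hpq1e : pq1 ∈ l.erase pq0 := (List.mem_erase_of_ne hne01).2 hpq1l
      set tail := (l.erase pq0).erase pq1 with htail
      set newl := (R, pq1.2) :: tail with hnewl
      have htail_sub : ∀ pq ∈ tail, pq ∈ l := fun pq h =>
        List.mem_of_mem_erase (List.mem_of_mem_erase h)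
      have hlen1 : (l.erase pq0).length = l.length - 1 := List.length_erase_of_mem hpq0l
      have hlen2 : tail.length = (l.erase pq0).length - 1 := List.length_erase_of_mem hpq1e
      have hlpos : 1 ≤ (l.erase pq0).length := by
        rcases List.eq_nil_or_concat (l.erase pq0) with hnil | _
        · rw [hnil] at hpq1e
          exact absurd hpq1e List.not_mem_nil
        · by_contra hcon
          push_neg at hcon
          interval_cases h : (l.erase pq0).length
          · exact absurd hpq1e (List.eq_nil_of_length_eq_zero h ▸ List.not_mem_nil)
      have hlennew : newl.length ≤ N := by
        rw [hnewl]
        simp only [List.length_cons]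
        omega
      have hdy' : ∀ pq ∈ newl, IsDyadic pq.1 ∧ IsDyadic pq.2 ∧ pq.1 < pq.2 := by
        intro pq hpq
        rcases List.mem_cons.1 hpq with rfl | hpq
        · exact ⟨hR, (hdy pq1 hpq1l).2.1, lt_trans hRs0 hs0b⟩
        · exact hdy pq (htail_sub pq hpq)
      have hcover' : (⋃ pq ∈ newl, Set.Ioo pq.1 pq.2) = Set.Ioo R S := by
        apply Set.Subset.antisymm
        · intro t ht
          simp only [Set.mem_iUnion] at ht
          obtain ⟨pq, hpql', ht1, ht2⟩ := ht
          rcases List.mem_cons.1 hpql' with rfl | hpql'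
          · exact ⟨ht1, lt_of_lt_of_le ht2 (hbounds pq1 hpq1l).2⟩
          · have := hbounds pq (htail_sub pq hpql')
            exact ⟨lt_of_le_of_lt this.1 ht1, lt_of_lt_of_le ht2 this.2⟩
        · intro t ht
          have ht' := ht
          rw [← hcover] at ht'
          simp only [Set.mem_iUnion] at ht'
          obtain ⟨pq, hpql', ht1, ht2⟩ := ht'
          simp only [Set.mem_iUnion]
          by_cases hmem : pq ∈ tail
          · exact ⟨pq, List.mem_cons.2 (Or.inr hmem), ht1, ht2⟩
          · have hpq01 : pq = pq0 ∨ pq = pq1 := by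
              by_contra hcon
              push_neg at hcon
              exact hmem ((List.mem_erase_of_ne hcon.2).2
                ((List.mem_erase_of_ne hcon.1).2 hpql'))
            refine ⟨(R, pq1.2), List.mem_cons.2 (Or.inl rfl), ?_, ?_⟩
            · rcases hpq01 with rfl | rfl
              · rw [← hpq0R]; exact ht1
              · exact lt_of_le_of_lt (hbounds pq hpql').1 ht1
            · rcases hpq01 with rfl | rfl
              · exact lt_trans ht2 hs0b
              · exact ht2
      have hres := ih newl hlennew (List.cons_ne_nil _ _) hdy' R S hR hS hRS hcover'
      have hle : Subgroup.closure (⋃ pq ∈ newl, {g : Equiv.Perm ℝ | InF pq.1 pq.2 g}) ≤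
          Subgroup.closure (⋃ pq ∈ l, {g : Equiv.Perm ℝ | InF pq.1 pq.2 g}) := by
        rw [Subgroup.closure_le]
        intro g hgmem
        simp only [Set.mem_iUnion] at hgmem
        obtain ⟨pq, hpq, hginpq⟩ := hgmem
        rcases List.mem_cons.1 hpq with rfl | hpq
        · have h2i := two_interval hR (hdy pq1 hpq1l).2.1 (hdy pq1 hpq1l).1
            (hdy pq0 hpq0l).2.1 (hbounds pq1 hpq1l).1 hs0a (le_of_lt hs0b)
          have hgin2 := h2i hginpq
          have hsub2 : ({g : Equiv.Perm ℝ | InF R pq0.2 g} ∪ {g | InF pq1.1 pq1.2 g}) ⊆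
              ↑(Subgroup.closure (⋃ pq ∈ l, {g : Equiv.Perm ℝ | InF pq.1 pq.2 g})) := by
            intro x hx
            rcases hx with hx | hx
            · refine Subgroup.subset_closure ?_
              simp only [Set.mem_iUnion]
              refine ⟨pq0, hpq0l, ?_⟩
              rw [Set.mem_setOf_eq, hpq0R]
              exact hx
            · refine Subgroup.subset_closure ?_
              simp only [Set.mem_iUnion]
              exact ⟨pq1, hpq1l, hx⟩
          exact (Subgroup.closure_le _).2 hsub2 hgin2
        · refine Subgroup.subset_closure ?_
          simp only [Set.mem_iUnion]
          exact ⟨pq, htail_sub pq hpq, hginpq⟩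
      exact fun g hg => hle (hres hg)


theorem statement5 (k : ℕ) (hk : 2 ≤ k) (r s : Fin k → ℝ) (R S : ℝ)
    (hr : ∀ i, IsDyadic (r i)) (hs : ∀ i, IsDyadic (s i))
    (hR : IsDyadic R) (hS : IsDyadic S) (hRS : R < S)
    (hrs : ∀ i, r i < s i)
    (hcover : (⋃ i, Set.Ioo (r i) (s i)) = Set.Ioo R S) :
    (Subgroup.closure (⋃ i, {g | InF (r i) (s i) g}) : Set (Equiv.Perm ℝ)) =
      {g | InF R S g} := by
  classical
  set l : List (ℝ × ℝ) := List.ofFn (fun i => (r i, s i)) with hl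
  have hlmem : ∀ pq : ℝ × ℝ, pq ∈ l ↔ ∃ i, (r i, s i) = pq := by
    intro pq
    simp [hl, List.mem_ofFn]
  have hgens : (⋃ pq ∈ l, {g : Equiv.Perm ℝ | InF pq.1 pq.2 g}) =
      ⋃ i, {g : Equiv.Perm ℝ | InF (r i) (s i) g} := by
    ext g
    simp only [Set.mem_iUnion]
    constructor
    · rintro ⟨pq, hpq, hg⟩
      obtain ⟨i, hi⟩ := (hlmem pq).1 hpq
      rw [← hi] at hg
      exact ⟨i, hg⟩
    · rintro ⟨i, hg⟩
      exact ⟨(r i, s i), (hlmem _).2 ⟨i, rfl⟩, hg⟩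
  have hbounds : ∀ i, R ≤ r i ∧ s i ≤ S := by
    intro i
    have hsub : Set.Ioo (r i) (s i) ⊆ Set.Ioo R S := by
      rw [← hcover]
      intro t ht
      exact Set.mem_iUnion.2 ⟨i, ht⟩
    exact (Set.Ioo_subset_Ioo_iff (hrs i)).1 hsub
  apply Set.Subset.antisymm
  · let K : Subgroup (Equiv.Perm ℝ) :=
      { carrier := {g | InF R S g}
        one_mem' := InF_one hR hS hRS
        mul_mem' := fun ha hb => InF.mul_s5 ha hb
        inv_mem' := fun ha => InF.inv_s5 ha }
    have hle : Subgroup.closure (⋃ i, {g : Equiv.Perm ℝ | InF (r i) (s i) g}) ≤ K := by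
      rw [Subgroup.closure_le]
      refine Set.iUnion_subset (fun i g hg => ?_)
      exact InF.mono hg hR hS (hbounds i).1 (hbounds i).2
    exact fun g hg => hle hg
  · intro g hg
    have hlcover : (⋃ pq ∈ l, Set.Ioo pq.1 pq.2) = Set.Ioo R S := by
      rw [← hcover]
      ext t
      simp only [Set.mem_iUnion]
      constructor
      · rintro ⟨pq, hpq, ht⟩
        obtain ⟨i, hi⟩ := (hlmem pq).1 hpq
        rw [← hi] at ht
        exact ⟨i, ht⟩
      · rintro ⟨i, ht⟩
        exact ⟨(r i, s i), (hlmem _).2 ⟨i, rfl⟩, ht⟩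
    have hlne : l ≠ [] := by
      have hlk : l.length = k := by simp [hl]
      intro hnil
      rw [hnil] at hlk
      simp at hlk
      omega
    have hldy : ∀ pq ∈ l, IsDyadic pq.1 ∧ IsDyadic pq.2 ∧ pq.1 < pq.2 := by
      intro pq hpq
      obtain ⟨i, hi⟩ := (hlmem pq).1 hpq
      rw [← hi]
      exact ⟨hr i, hs i, hrs i⟩
    have hmain := cover_induction l.length l le_rfl hlne hldy R S hR hS hRS hlcover hg
    rwa [hgens] at hmain


end
end
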